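/- arXiv:1610.07223 — 10 statements merged into one kernel-verified Lean document; each statement's English description precedes it below -/
import Mathlib

section
/- Let G be a nontrivial abelian bi-orderable group (equivalently, a nontrivial torsion-free abelian group) and let φ be an automorphism of G that acts trivially on LO(G), i.e. φ(P) = P for every positive cone P of G. Then there exist positive integers p and q such that φ(g)^q = g^p for all g ∈ G (so φ is the automorphism τ_{p/q}). -/
/-- `P` is the positive cone of a left-invariant strict total order on `G`. -/
def IsPositiveCone {G : Type*} [Group G] (P : Set G) : Prop :=
  (∀ a ∈ P, ∀ b ∈ P, a * b ∈ P) ∧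
  (∀ g : G, g ∈ P ∨ g⁻¹ ∈ P ∨ g = 1) ∧
  (∀ g ∈ P, g⁻¹ ∉ P) ∧
  (1 : G) ∉ P

/-- `G` is bi-orderable: it admits a positive cone invariant under conjugation. -/
def IsBiOrderable (G : Type*) [Group G] : Prop :=
  ∃ P : Set G, IsPositiveCone P ∧ ∀ g : G, ∀ p ∈ P, g * p * g⁻¹ ∈ P

section Aux

variable {G : Type*} [CommGroup G]

/-- Powers stay in a multiplicatively closed set. -/
lemma closed_pow_mem {T : Set G} (hT : ∀ a ∈ T, ∀ b ∈ T, a * b ∈ T) {g : G} (hg : g ∈ T) :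
    ∀ n : ℕ, 0 < n → g ^ n ∈ T := by
  intro n hn
  induction n with
  | zero => exact absurd hn (lt_irrefl 0)
  | succ k ih =>
    rcases Nat.eq_zero_or_pos k with hk | hk
    · subst hk; simpa using hg
    · rw [pow_succ]; exact hT _ (ih hk) _ hg

lemma cone_zpow_mem {P : Set G} (hP : IsPositiveCone P) {g : G} (hg : g ∈ P)
    {n : ℤ} (hn : 0 < n) : g ^ n ∈ P := by
  have : g ^ n = g ^ n.toNat := by
    rw [← zpow_natCast, Int.toNat_of_nonneg hn.le]
  rw [this]
  exact closed_pow_mem hP.1 hg n.toNat (by omega)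

/-- A positively ordered group is torsion-free. -/
lemma cone_torsionFree {P : Set G} (hP : IsPositiveCone P) :
    ∀ g : G, g ≠ 1 → ∀ n : ℤ, g ^ n = 1 → n = 0 := by
  intro g hg n hn
  by_contra h0
  have key : ∀ m : ℤ, 0 < m → g ^ m = 1 → False := by
    intro m hm hgm
    rcases hP.2.1 g with h | h | h
    · exact hP.2.2.2 (hgm ▸ cone_zpow_mem hP h hm)
    · have : (g⁻¹) ^ m = 1 := by rw [inv_zpow, hgm, inv_one]
      exact hP.2.2.2 (this ▸ cone_zpow_mem hP h hm)
    · exact hg h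
  rcases lt_trichotomy n 0 with h | h | h
  · exact key (-n) (by omega) (by rw [zpow_neg, hn, inv_one])
  · exact h0 h
  · exact key n h hn

lemma cone_torsionFree_nat {P : Set G} (hP : IsPositiveCone P) :
    ∀ g : G, g ≠ 1 → ∀ n : ℕ, 0 < n → g ^ n ≠ 1 := by
  intro g hg n hn hgn
  have := cone_torsionFree hP g hg n (by rw [zpow_natCast]; exact hgn)
  omega

/-- Sign analysis: a relation between two positive elements must have exponents of
opposite signs. -/
lemma cone_signs {P : Set G} (hP : IsPositiveCone P) {u v : G} (hu : u ∈ P) (hv : v ∈ P)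
    {a b : ℤ} (hrel : u ^ a * v ^ b = 1) (ha : a ≠ 0) (hb : b ≠ 0) :
    (0 < a ∧ b < 0) ∨ (a < 0 ∧ 0 < b) := by
  rcases lt_trichotomy a 0 with h1 | h1 | h1 <;> rcases lt_trichotomy b 0 with h2 | h2 | h2
  · exfalso
    have hm : u ^ (-a) * v ^ (-b) ∈ P :=
      hP.1 _ (cone_zpow_mem hP hu (by omega)) _ (cone_zpow_mem hP hv (by omega))
    have heq : u ^ (-a) * v ^ (-b) = 1 := by
      rw [zpow_neg, zpow_neg, ← mul_inv, hrel, inv_one]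
    exact hP.2.2.2 (heq ▸ hm)
  · exact absurd h2 hb
  · exact Or.inr ⟨h1, h2⟩
  · exact absurd h1 ha
  · exact absurd h1 ha
  · exact absurd h1 ha
  · exact Or.inl ⟨h1, h2⟩
  · exact absurd h2 hb
  · exfalso
    have hm : u ^ a * v ^ b ∈ P :=
      hP.1 _ (cone_zpow_mem hP hu h1) _ (cone_zpow_mem hP hv h2)
    exact hP.2.2.2 (hrel ▸ hm)

/-- Zorn: every multiplicatively closed set avoiding `1` in a torsion-free abelian
group extends to a positive cone. -/
lemma exists_cone_extension (htf : ∀ g : G, g ≠ 1 → ∀ n : ℕ, 0 < n → g ^ n ≠ 1)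
    (S : Set G) (hmul : ∀ a ∈ S, ∀ b ∈ S, a * b ∈ S) (h1 : (1 : G) ∉ S) :
    ∃ P : Set G, IsPositiveCone P ∧ S ⊆ P := by
  classical
  set C : Set (Set G) :=
    {T | (∀ a ∈ T, ∀ b ∈ T, a * b ∈ T) ∧ (1 : G) ∉ T ∧ S ⊆ T} with hC
  have hchain : ∀ c ⊆ C, IsChain (· ⊆ ·) c → c.Nonempty →
      ∃ ub ∈ C, ∀ s ∈ c, s ⊆ ub := by
    intro c hc hchain hne
    refine ⟨⋃₀ c, ⟨?_, ?_, ?_⟩, fun s hs => Set.subset_sUnion_of_mem hs⟩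
    · rintro a ⟨T₁, hT₁, ha⟩ b ⟨T₂, hT₂, hb⟩
      rcases hchain.total hT₁ hT₂ with h | h
      · exact Set.mem_sUnion.2 ⟨T₂, hT₂, (hc hT₂).1 _ (h ha) _ hb⟩
      · exact Set.mem_sUnion.2 ⟨T₁, hT₁, (hc hT₁).1 _ ha _ (h hb)⟩
    · rintro ⟨T, hT, h1T⟩
      exact (hc hT).2.1 h1T
    · obtain ⟨T, hT⟩ := hne
      exact (hc hT).2.2.trans (Set.subset_sUnion_of_mem hT)
  obtain ⟨M, hSM, hMmax⟩ := zorn_subset_nonempty C hchain S ⟨hmul, h1, subset_rfl⟩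
  have hMC : M ∈ C := hMmax.1
  -- key step: adjoining an element to M
  have hadj : ∀ x : G, x ≠ 1 → x ∉ M → ∃ m ∈ M, ∃ n : ℕ, 0 < n ∧ m * x ^ n = 1 := by
    intro x hx hxM
    set T : Set G := {z | (∃ n : ℕ, z = x ^ (n + 1)) ∨ ∃ m ∈ M, ∃ n : ℕ, z = m * x ^ n} with hT
    have hTmul : ∀ a ∈ T, ∀ b ∈ T, a * b ∈ T := by
      rintro a (⟨n, rfl⟩ | ⟨m, hm, n, rfl⟩) b (⟨k, rfl⟩ | ⟨m', hm', k, rfl⟩)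
      · refine Or.inl ⟨n + k + 1, ?_⟩
        rw [← pow_add]
        congr 1
        omega
      · refine Or.inr ⟨m', hm', n + 1 + k, ?_⟩
        rw [pow_add x (n + 1) k]
        exact mul_left_comm (x ^ (n + 1)) m' (x ^ k)
      · refine Or.inr ⟨m, hm, n + (k + 1), ?_⟩
        rw [pow_add x n (k + 1)]
        exact mul_assoc m (x ^ n) (x ^ (k + 1))
      · refine Or.inr ⟨m * m', hMC.1 _ hm _ hm', n + k, ?_⟩
        rw [pow_add x n k]
        exact mul_mul_mul_comm m (x ^ n) m' (x ^ k)
    have hMT : M ⊆ T := fun m hm => Or.inr ⟨m, hm, 0, by simp⟩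
    have hxT : x ∈ T := Or.inl ⟨0, by simp⟩
    have h1T : (1 : G) ∈ T := by
      by_contra h1T
      have hTC : T ∈ C := ⟨hTmul, h1T, hMC.2.2.trans hMT⟩
      have := hMmax.2 hTC hMT
      exact hxM (this hxT)
    rcases h1T with ⟨n, hn⟩ | ⟨m, hm, n, hn⟩
    · exact absurd hn.symm (htf x hx (n + 1) (Nat.succ_pos n))
    · rcases Nat.eq_zero_or_pos n with h | h
      · subst h; simp at hn; exact absurd (hn ▸ hm) hMC.2.1
      · exact ⟨m, hm, n, h, hn.symm⟩
  refine ⟨M, ⟨hMC.1, ?_, ?_, hMC.2.1⟩, hMC.2.2⟩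
  · -- trichotomy
    intro g
    by_contra hcon
    push_neg at hcon
    obtain ⟨hg, hg', hg1⟩ := hcon
    obtain ⟨m, hm, n, hn, hmn⟩ := hadj g hg1 hg
    have hg1' : g⁻¹ ≠ 1 := by simpa using hg1
    obtain ⟨m', hm', n', hn', hmn'⟩ := hadj g⁻¹ hg1' hg'
    have e1 : m ^ n' * g ^ (n * n') = 1 := by
      have := congrArg (· ^ n') hmn
      simpa [mul_pow, ← pow_mul, one_pow] using this
    have e2 : m' ^ n * (g ^ (n * n'))⁻¹ = 1 := by
      have h2 := congrArg (· ^ n) hmn'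
      simp only [mul_pow, inv_pow, ← pow_mul, one_pow] at h2
      rwa [Nat.mul_comm n' n] at h2
    have e3 : (m ^ n' * g ^ (n * n')) * (m' ^ n * (g ^ (n * n'))⁻¹) = 1 := by
      rw [e1, e2, one_mul]
    rw [mul_mul_mul_comm, mul_inv_cancel, mul_one] at e3
    have hmem : m ^ n' * m' ^ n ∈ M :=
      hMC.1 _ (closed_pow_mem hMC.1 hm n' hn') _ (closed_pow_mem hMC.1 hm' n hn)
    exact hMC.2.1 (e3 ▸ hmem)
  · -- g ∈ M → g⁻¹ ∉ M
    intro g hg hg'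
    have hm : g * g⁻¹ ∈ M := hMC.1 _ hg _ hg'
    rw [mul_inv_cancel] at hm
    exact hMC.2.1 hm

end Aux

section Main

variable {G : Type*} [CommGroup G]

/-- Membership in a fixed cone transfers along `φ`. -/
lemma mem_cone_iff (φ : G ≃* G) (hφ : ∀ P : Set G, IsPositiveCone P → ⇑φ '' P = P)
    {P : Set G} (hP : IsPositiveCone P) (x : G) : x ∈ P ↔ φ x ∈ P := by
  constructor
  · intro hx
    rw [← hφ P hP]
    exact ⟨x, hx, rfl⟩
  · intro hx
    rw [← hφ P hP] at hx
    obtain ⟨y, hy, hyx⟩ := hx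
    rwa [← φ.injective hyx]

/-- For each `g ≠ 1` there is a rational ratio: `φ(g)^q = g^p` with `p, q > 0`. -/
lemma ratio_exists {P₀ : Set G} (hP₀ : IsPositiveCone P₀)
    (φ : G ≃* G) (hφ : ∀ P : Set G, IsPositiveCone P → ⇑φ '' P = P)
    {g : G} (hg : g ≠ 1) :
    ∃ p q : ℤ, 0 < p ∧ 0 < q ∧ (φ g) ^ q = g ^ p := by
  classical
  set h : G := φ g with hh
  have hh1 : h ≠ 1 := fun e => hg (φ.injective (by rw [map_one]; exact e))
  by_cases hrel : ∃ a b : ℤ, (a ≠ 0 ∨ b ≠ 0) ∧ g ^ a * h ^ b = 1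
  · obtain ⟨a, b, hab, he⟩ := hrel
    have htfP := cone_torsionFree hP₀
    have ha : a ≠ 0 := by
      rintro rfl
      simp only [zpow_zero, one_mul] at he
      exact hab.resolve_left (fun hc => hc rfl) (htfP h hh1 b he)
    have hb : b ≠ 0 := by
      rintro rfl
      simp only [zpow_zero, mul_one] at he
      exact ha (htfP g hg a he)
    -- sign analysis
    have hsigns : (0 < a ∧ b < 0) ∨ (a < 0 ∧ 0 < b) := by
      rcases hP₀.2.1 g with hgP | hgP | hgP
      · have hhP : h ∈ P₀ := (mem_cone_iff φ hφ hP₀ g).1 hgP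
        exact cone_signs hP₀ hgP hhP he ha hb
      · have hhP : h⁻¹ ∈ P₀ := by
          have hiff : g⁻¹ ∈ P₀ ↔ φ g⁻¹ ∈ P₀ := mem_cone_iff φ hφ hP₀ g⁻¹
          simpa [hh] using hiff.1 hgP
        have he' : (g⁻¹) ^ (-a) * (h⁻¹) ^ (-b) = 1 := by
          rw [inv_zpow, inv_zpow, ← zpow_neg, ← zpow_neg]
          simpa using he
        have := cone_signs hP₀ hgP hhP he' (by omega) (by omega)
        omega
      · exact absurd hgP hg
    rcases hsigns with ⟨ha', hb'⟩ | ⟨ha', hb'⟩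
    · refine ⟨a, -b, ha', by omega, ?_⟩
      have hkey2 : g ^ a = (h ^ b)⁻¹ := eq_inv_of_mul_eq_one_left he
      rw [hkey2]
      exact zpow_neg h b
    · refine ⟨-a, b, by omega, hb', ?_⟩
      have hkey : h ^ b = (g ^ a)⁻¹ := eq_inv_of_mul_eq_one_right he
      rw [hkey]
      exact (zpow_neg g a).symm
  · -- independent: build a cone with g positive and h negative, contradiction
    exfalso
    push_neg at hrel
    set S : Set G := {z | ∃ a b : ℕ, 0 < a + b ∧ z = g ^ a * (h⁻¹) ^ b} with hS
    have hSmul : ∀ x ∈ S, ∀ y ∈ S, x * y ∈ S := by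
      rintro x ⟨a, b, hab, rfl⟩ y ⟨c, d, hcd, rfl⟩
      refine ⟨a + c, b + d, by omega, ?_⟩
      rw [pow_add, pow_add]
      exact (mul_mul_mul_comm _ _ _ _).symm
    have h1S : (1 : G) ∉ S := by
      rintro ⟨a, b, hab, he⟩
      have heq : g ^ (a : ℤ) * h ^ (-(b : ℤ)) = 1 := by
        rw [zpow_neg, zpow_natCast, zpow_natCast, ← inv_pow]
        exact he.symm
      have hab' : (a : ℤ) ≠ 0 ∨ -(b : ℤ) ≠ 0 := by
        rcases Nat.eq_zero_or_pos a with h' | h'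
        · right; omega
        · left; omega
      exact hrel _ _ hab' heq
    obtain ⟨P, hP, hSP⟩ :=
      exists_cone_extension (cone_torsionFree_nat hP₀) S hSmul h1S
    have hgP : g ∈ P := hSP ⟨1, 0, by omega, by simp⟩
    have hhiP : h⁻¹ ∈ P := hSP ⟨0, 1, by omega, by simp⟩
    have hhP : h ∈ P := (mem_cone_iff φ hφ hP g).1 hgP
    exact hP.2.2.1 h hhP hhiP

end Main

/-- If `G` is a nontrivial abelian bi-orderable group and `φ ∈ Aut(G)` fixes every
positive cone, then `φ = τ_{p/q}` for some positive integers `p, q`, i.e.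
`φ(g)^q = g^p` for all `g ∈ G`. -/
theorem kernel_of_action_abelian {G : Type*} [CommGroup G] (hG : ∃ g : G, g ≠ 1)
    (hbo : IsBiOrderable G)
    (φ : G ≃* G) (hφ : ∀ P : Set G, IsPositiveCone P → ⇑φ '' P = P) :
    ∃ p q : ℕ, 0 < p ∧ 0 < q ∧ ∀ g : G, (φ g) ^ q = g ^ p := by
  classical
  obtain ⟨P₀, hP₀, -⟩ := hbo
  obtain ⟨g₀, hg₀⟩ := hG
  have htf := cone_torsionFree hP₀
  obtain ⟨p, q, hp, hq, hpq⟩ := ratio_exists hP₀ φ hφ hg₀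
  -- the ratio is the same for every g
  have key : ∀ g : G, (φ g) ^ q = g ^ p := by
    intro g
    by_cases hg : g = 1
    · subst hg; simp
    obtain ⟨p', q', hp', hq', hpq'⟩ := ratio_exists hP₀ φ hφ hg
    -- it suffices to show p * q' = p' * q
    suffices hr : p * q' = p' * q by
      have e1 : (φ g) ^ (q * q') = g ^ (p * q') := by
        calc (φ g) ^ (q * q') = ((φ g) ^ q') ^ q := by rw [← zpow_mul, mul_comm]
          _ = (g ^ p') ^ q := by rw [hpq']
          _ = g ^ (p * q') := by rw [← zpow_mul, hr]
      have e2 : ((φ g) ^ q * (g ^ p)⁻¹) ^ q' = 1 := by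
        rw [mul_zpow, ← zpow_mul, e1, inv_zpow, ← zpow_mul, mul_inv_cancel]
      have e3 : (φ g) ^ q * (g ^ p)⁻¹ = 1 := by
        by_contra hne
        have := htf _ hne q' e2
        omega
      rw [mul_inv_eq_one] at e3
      exact e3
    by_cases hrel : ∃ a b : ℤ, (a ≠ 0 ∨ b ≠ 0) ∧ g₀ ^ a * g ^ b = 1
    · -- g and g₀ satisfy a relation
      obtain ⟨a, b, hab, he⟩ := hrel
      have ha : a ≠ 0 := by
        rintro rfl
        simp only [zpow_zero, one_mul] at he
        exact hab.resolve_left (fun hc => hc rfl) (htf g hg b he)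
      have hb : b ≠ 0 := by
        rintro rfl
        simp only [zpow_zero, mul_one] at he
        exact ha (htf g₀ hg₀ a he)
      have heφ : (φ g₀) ^ a * (φ g) ^ b = 1 := by
        have hc := congrArg φ he
        simpa [map_mul, map_zpow] using hc
      have t1 : (φ g₀) ^ (a * (q * q')) * (φ g) ^ (b * (q * q')) = 1 := by
        have hc := congrArg (· ^ (q * q')) heφ
        simpa [mul_zpow, ← zpow_mul, one_zpow] using hc
      have R1 : g₀ ^ (a * (p * q')) * g ^ (b * (p' * q)) = 1 := by
        calc g₀ ^ (a * (p * q')) * g ^ (b * (p' * q))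
            = (g₀ ^ p) ^ (a * q') * (g ^ p') ^ (b * q) := by
              rw [← zpow_mul, ← zpow_mul, show p * (a * q') = a * (p * q') by ring,
                show p' * (b * q) = b * (p' * q) by ring]
          _ = ((φ g₀) ^ q) ^ (a * q') * ((φ g) ^ q') ^ (b * q) := by rw [hpq, hpq']
          _ = (φ g₀) ^ (a * (q * q')) * (φ g) ^ (b * (q * q')) := by
              rw [← zpow_mul, ← zpow_mul, show q * (a * q') = a * (q * q') by ring,
                show q' * (b * q) = b * (q * q') by ring]
          _ = 1 := t1
      have R2 : g₀ ^ (a * (p * q')) * g ^ (b * (p * q')) = 1 := by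
        have hc := congrArg (· ^ (p * q')) he
        simpa [mul_zpow, ← zpow_mul, one_zpow] using hc
      have hdiff : g ^ (b * (p' * q) - b * (p * q')) = 1 := by
        rw [zpow_sub]
        exact mul_inv_eq_one.2 (mul_left_cancel (R1.trans R2.symm))
      have h0 := htf g hg _ hdiff
      have h1 : b * (p' * q) = b * (p * q') := by omega
      have h2 := mul_left_cancel₀ hb h1
      exact h2.symm
    · -- no relation: use g₀ * g
      push_neg at hrel
      have hrel' : ∀ a b : ℤ, g₀ ^ a * g ^ b = 1 → a = 0 ∧ b = 0 := by
        intro a b hab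
        by_contra hc
        push_neg at hc
        rcases Classical.em (a = 0) with h' | h'
        · exact hrel a b (Or.inr (hc h')) hab
        · exact hrel a b (Or.inl h') hab
      have hgg : g₀ * g ≠ 1 := by
        intro hgg
        have hz : g₀ ^ (1 : ℤ) * g ^ (1 : ℤ) = 1 := by simpa using hgg
        exact one_ne_zero (hrel' 1 1 hz).1
      obtain ⟨p'', q'', hp'', hq'', hpq''⟩ := ratio_exists hP₀ φ hφ hgg
      -- compute (φ (g₀ * g)) ^ (q * q' * q'') in two ways
      have E1 : (φ (g₀ * g)) ^ (q * q' * q'')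
          = g₀ ^ (p'' * (q * q')) * g ^ (p'' * (q * q')) := by
        calc (φ (g₀ * g)) ^ (q * q' * q'')
            = ((φ (g₀ * g)) ^ q'') ^ (q * q') := by
              rw [← zpow_mul, show q'' * (q * q') = q * q' * q'' by ring]
          _ = ((g₀ * g) ^ p'') ^ (q * q') := by rw [hpq'']
          _ = g₀ ^ (p'' * (q * q')) * g ^ (p'' * (q * q')) := by
              rw [mul_zpow, mul_zpow, ← zpow_mul, ← zpow_mul]
      have E2 : (φ (g₀ * g)) ^ (q * q' * q'')
          = g₀ ^ (p * (q' * q'')) * g ^ (p' * (q * q'')) := by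
        calc (φ (g₀ * g)) ^ (q * q' * q'')
            = (φ g₀) ^ (q * q' * q'') * (φ g) ^ (q * q' * q'') := by rw [map_mul, mul_zpow]
          _ = ((φ g₀) ^ q) ^ (q' * q'') * ((φ g) ^ q') ^ (q * q'') := by
              rw [← zpow_mul, ← zpow_mul, show q * (q' * q'') = q * q' * q'' by ring,
                show q' * (q * q'') = q * q' * q'' by ring]
          _ = g₀ ^ (p * (q' * q'')) * g ^ (p' * (q * q'')) := by
              rw [hpq, hpq', ← zpow_mul, ← zpow_mul]
      have hEq : g₀ ^ (p'' * (q * q')) * g ^ (p'' * (q * q'))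
          = g₀ ^ (p * (q' * q'')) * g ^ (p' * (q * q'')) := E1.symm.trans E2
      have hzero : g₀ ^ (p'' * (q * q') - p * (q' * q''))
          * g ^ (p'' * (q * q') - p' * (q * q'')) = 1 := by
        rw [zpow_sub, zpow_sub, mul_mul_mul_comm, ← mul_inv]
        exact mul_inv_eq_one.2 hEq
      obtain ⟨hz1, hz2⟩ := hrel' _ _ hzero
      have h1 : p'' * (q * q') = p * (q' * q'') := by omega
      have h2 : p'' * (q * q') = p' * (q * q'') := by omega
      have h3 : p * (q' * q'') = p' * (q * q'') := h1.symm.trans h2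
      have h4 : (p * q') * q'' = (p' * q) * q'' := by linear_combination h3
      exact mul_right_cancel₀ (by omega : q'' ≠ 0) h4
  exact ⟨p.toNat, q.toNat, by omega, by omega, fun g => by
    have hk := key g
    rw [← zpow_natCast, ← zpow_natCast, Int.toNat_of_nonneg hq.le, Int.toNat_of_nonneg hp.le]
    exact hk⟩
end

section
/- Suppose G is a left-orderable group, K is a normal subgroup of G, and π : G → ℤ is a surjective homomorphism with kernel K. Suppose that Aut(K) acts faithfully on LO(K), and that there exist t ∈ G with π(t) = 1 and a positive cone P_K of K with tP_Kt⁻¹ = P_K (i.e. conjugation by the generator of ℤ preserves a left-ordering of K). Then Aut(G) acts faithfully on LO(G): for every automorphism φ of G with φ ≠ id there exists a positive cone P of G with φ(P) ≠ P. -/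
/-!
Write `K = ker π`. An automorphism `φ` either moves some element of `K` out of `K`, or acts on
`G ⧸ K ≅ ℤ` as `±1`. The lexicographic cones `π⁻¹(R) ∪ Q`, in which the quotient is compared
first, detect the first case (choose `R` so that a positive element of `K` is sent to a negative
one), the sign `-1` (`t` is moved), and a nontrivial restriction `φ|K` (the cone meets `K` in `Q`).
There remains `φ` fixing `K` pointwise with `π ∘ φ = π`; then `φ t = e t` with `1 ≠ e ∈ K`.
Here `K` is compared first: writing `g = k tʲ`, `g` is positive when `k ∈ Q`, or `k = 1` and
`j > 0`. This is a cone because conjugation by `t` preserves `Q`, and for the ordering `Q` of `K`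
in which `e` is negative it contains `t` but not `φ t`.
-/

open Pointwise Multiplicative

namespace IsPositiveCone

variable {G H : Type*} [Group G] [Group H] {P : Set G}

theorem mul_mem (hP : IsPositiveCone P) {a b : G} (ha : a ∈ P) (hb : b ∈ P) : a * b ∈ P :=
  hP.1 a ha b hb

theorem mem_or_inv_mem_or_eq_one (hP : IsPositiveCone P) (g : G) : g ∈ P ∨ g⁻¹ ∈ P ∨ g = 1 :=
  hP.2.1 g

theorem inv_notMem (hP : IsPositiveCone P) {g : G} (hg : g ∈ P) : g⁻¹ ∉ P :=
  hP.2.2.1 g hg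

theorem one_notMem (hP : IsPositiveCone P) : (1 : G) ∉ P :=
  hP.2.2.2

theorem inv (hP : IsPositiveCone P) : IsPositiveCone P⁻¹ := by
  refine ⟨fun a ha b hb => ?_, fun g => ?_, fun g hg => hP.inv_notMem hg, ?_⟩
  · simpa [Set.mem_inv, mul_inv_rev] using hP.mul_mem hb ha
  · rcases hP.mem_or_inv_mem_or_eq_one g with h | h | h
    · exact Or.inr (Or.inl (by simpa using h))
    · exact Or.inl h
    · exact Or.inr (Or.inr h)
  · simpa using hP.one_notMem

theorem setOf_one_lt (H : Type*) [Group H] [LinearOrder H] [MulLeftMono H] :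
    IsPositiveCone {x : H | 1 < x} := by
  refine ⟨fun a ha b hb => one_lt_mul' ha hb, fun g => ?_, fun g hg => ?_, lt_irrefl 1⟩
  · rcases lt_trichotomy g 1 with h | h | h
    · exact Or.inr (Or.inl (Left.one_lt_inv_iff.2 h))
    · exact Or.inr (Or.inr h)
    · exact Or.inl h
  · simpa [Left.one_lt_inv_iff] using hg.le

theorem lex {π : G →* H} {R : Set H} (hR : IsPositiveCone R) {Q : Set π.ker}
    (hQ : IsPositiveCone Q) : IsPositiveCone (π ⁻¹' R ∪ Subtype.val '' Q) := by
  refine ⟨?_, fun g => ?_, ?_, ?_⟩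
  · rintro a (ha | ⟨x, hx, rfl⟩) b (hb | ⟨y, hy, rfl⟩)
    · exact Or.inl (by simpa using hR.mul_mem ha hb)
    · exact Or.inl (by simpa [π.mem_ker.1 y.2] using ha)
    · exact Or.inl (by simpa [π.mem_ker.1 x.2] using hb)
    · exact Or.inr ⟨x * y, hQ.mul_mem hx hy, rfl⟩
  · rcases hR.mem_or_inv_mem_or_eq_one (π g) with h | h | h
    · exact Or.inl (Or.inl h)
    · exact Or.inr (Or.inl (Or.inl (by simpa using h)))
    · rcases hQ.mem_or_inv_mem_or_eq_one ⟨g, h⟩ with h' | h' | h'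
      · exact Or.inl (Or.inr ⟨_, h', rfl⟩)
      · exact Or.inr (Or.inl (Or.inr ⟨_, h', rfl⟩))
      · exact Or.inr (Or.inr (congrArg Subtype.val h'))
  · rintro g (hg | ⟨x, hx, rfl⟩) (hg' | ⟨y, hy, hyx⟩)
    · exact hR.inv_notMem hg (by simpa using hg')
    · have : π g = 1 := by simpa [hyx] using π.mem_ker.1 y.2
      exact hR.one_notMem (this ▸ hg)
    · exact hR.one_notMem (by simpa [π.mem_ker.1 x.2] using hg')
    · exact hQ.inv_notMem hx (by rwa [show y = x⁻¹ from Subtype.ext hyx] at hy)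
  · rintro (h | ⟨x, hx, hx1⟩)
    · exact hR.one_notMem (by simpa using h)
    · exact hQ.one_notMem (by rwa [show x = 1 from Subtype.ext hx1] at hx)

theorem lex_inter_ker {π : G →* H} {R : Set H} (hR : IsPositiveCone R) (Q : Set π.ker) :
    (π ⁻¹' R ∪ Subtype.val '' Q) ∩ π.ker = Subtype.val '' Q := by
  ext g
  constructor
  · rintro ⟨h | h, hg⟩
    · exact absurd (π.mem_ker.1 hg ▸ h) hR.one_notMem
    · exact h
  · rintro ⟨k, hk, rfl⟩
    exact ⟨Or.inr ⟨k, hk, rfl⟩, k.2⟩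

end IsPositiveCone

theorem Set.image_ne_of_mem_of_apply_notMem {α : Type*} {f : α → α} {s : Set α} {a : α}
    (ha : a ∈ s) (hfa : f a ∉ s) : f '' s ≠ s :=
  fun h => hfa (h ▸ Set.mem_image_of_mem f ha)

section Lex

variable {G H : Type*} [Group G] [Group H] {π : G →* H} {R : Set H}

theorem exists_lex_image_ne_of_not_mapsTo_ker (hR : IsPositiveCone R) {Q : Set π.ker}
    (hQ : IsPositiveCone Q) (φ : G ≃* G) {g : G} (hg : g ∈ π.ker) (hφg : φ g ∉ π.ker) :
    ∃ P, IsPositiveCone P ∧ φ '' P ≠ P := by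
  obtain ⟨k, hk, hφk⟩ : ∃ k ∈ Q, φ k ∉ π.ker := by
    rcases hQ.mem_or_inv_mem_or_eq_one ⟨g, hg⟩ with h | h | h
    · exact ⟨_, h, hφg⟩
    · exact ⟨_, h, by simpa using hφg⟩
    · obtain rfl : g = 1 := congrArg Subtype.val h
      simp at hφg
  obtain ⟨R', hR', hφkR'⟩ : ∃ R', IsPositiveCone R' ∧ π (φ k) ∉ R' := by
    by_cases h : π (φ k) ∈ R
    · exact ⟨R⁻¹, hR.inv, hR.inv_notMem h⟩
    · exact ⟨R, hR, h⟩
  refine ⟨_, hR'.lex hQ, Set.image_ne_of_mem_of_apply_notMem (Or.inr ⟨k, hk, rfl⟩) ?_⟩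
  rintro (h | ⟨k', -, hk'⟩)
  · exact hφkR' h
  · exact hφk (hk' ▸ k'.2)

theorem MonoidHom.map_ker_eq_of_comp_eq {f : G →* H} {φ : G ≃* G} (h : f.comp φ.toMonoidHom = f) :
    f.ker.map φ.toMonoidHom = f.ker := by
  ext g
  simp only [Subgroup.mem_map_equiv, MonoidHom.mem_ker]
  rw [← DFunLike.congr_fun h (φ.symm g)]
  simp

def MulEquiv.subgroupRestrict (φ : G ≃* G) {K : Subgroup G} (h : K.map φ.toMonoidHom = K) :
    K ≃* K :=
  (φ.subgroupMap K).trans (MulEquiv.subgroupCongr h)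

theorem lex_image_ne_of_subgroupRestrict_image_ne (hR : IsPositiveCone R) {Q : Set π.ker}
    (φ : G ≃* G) (hφ : π.ker.map φ.toMonoidHom = π.ker) (hQ : φ.subgroupRestrict hφ '' Q ≠ Q) :
    φ '' (π ⁻¹' R ∪ Subtype.val '' Q) ≠ π ⁻¹' R ∪ Subtype.val '' Q := by
  intro h
  apply hQ
  apply Subtype.val_injective.image_injective
  calc Subtype.val '' (φ.subgroupRestrict hφ '' Q) = φ '' (Subtype.val '' Q) := by
        simp only [Set.image_image]; rfl
    _ = φ '' ((π ⁻¹' R ∪ Subtype.val '' Q) ∩ π.ker) := by rw [hR.lex_inter_ker]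
    _ = φ '' (π ⁻¹' R ∪ Subtype.val '' Q) ∩ φ '' π.ker := Set.image_inter φ.injective
    _ = (π ⁻¹' R ∪ Subtype.val '' Q) ∩ π.ker := by
        rw [h, ← MulEquiv.coe_toMonoidHom, ← Subgroup.coe_map, hφ]
    _ = Subtype.val '' Q := hR.lex_inter_ker Q

end Lex

section ExtensionByZ

variable {G : Type*} [Group G] {π : G →* Multiplicative ℤ} {t : G}

theorem map_zpow_of_eq_ofAdd_one (ht : π t = ofAdd 1) (k : ℤ) : π (t ^ k) = ofAdd k := by
  rw [map_zpow, ht, ← ofAdd_zsmul, smul_eq_mul, mul_one]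

def kerPart (ht : π t = ofAdd 1) (g : G) : π.ker :=
  ⟨g * t ^ (-(π g).toAdd), by simp [map_zpow_of_eq_ofAdd_one ht]⟩

theorem kerPart_mul_zpow (ht : π t = ofAdd 1) (g : G) :
    (kerPart ht g : G) * t ^ (π g).toAdd = g := by
  simp [kerPart]

theorem kerPart_mul (ht : π t = ofAdd 1) (a b : G) :
    kerPart ht (a * b) = kerPart ht a * MulAut.conjNormal (t ^ (π a).toAdd) (kerPart ht b) := by
  ext
  simp only [kerPart, map_mul, toAdd_mul, Subgroup.coe_mul, MulAut.conjNormal_apply]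
  group

theorem kerPart_inv (ht : π t = ofAdd 1) (g : G) :
    kerPart ht g⁻¹ = MulAut.conjNormal (t ^ (-(π g).toAdd)) (kerPart ht g)⁻¹ := by
  ext
  simp only [kerPart, map_inv, toAdd_inv, Subgroup.coe_inv, MulAut.conjNormal_apply]
  group

theorem kerPart_mul_self (ht : π t = ofAdd 1) (k : π.ker) : kerPart ht (k * t) = k := by
  ext
  simp [kerPart, ht, π.mem_ker.1 k.2]

theorem kerPart_one (ht : π t = ofAdd 1) : kerPart ht 1 = 1 := by
  ext
  simp [kerPart]

theorem apply_eq_apply_zpow_of_ker_le (ht : π t = ofAdd 1) {M : Type*} [Group M] {f : G →* M}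
    (h : π.ker ≤ f.ker) (g : G) : f g = f t ^ (π g).toAdd := by
  conv_lhs => rw [← kerPart_mul_zpow ht g]
  rw [map_mul, f.mem_ker.1 (h (kerPart ht g).2), one_mul, map_zpow]

theorem MonoidHom.eq_of_eqOn_ker_of_apply_eq (ht : π t = ofAdd 1) {M : Type*} [Group M]
    {f₁ f₂ : G →* M} (hker : ∀ k ∈ π.ker, f₁ k = f₂ k) (hft : f₁ t = f₂ t) : f₁ = f₂ := by
  ext g
  rw [← kerPart_mul_zpow ht g, map_mul, map_mul, map_zpow, map_zpow, hft,
    hker _ (kerPart ht g).2]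

theorem map_apply_eq_or_eq_inv (ht : π t = ofAdd 1) (φ : G ≃* G)
    (h : π.ker ≤ (π.comp φ.toMonoidHom).ker) : π (φ t) = π t ∨ π (φ t) = (π t)⁻¹ := by
  have key := apply_eq_apply_zpow_of_ker_le ht h (φ.symm t)
  simp only [MonoidHom.coe_comp, MulEquiv.coe_toMonoidHom, Function.comp_apply,
    MulEquiv.apply_symm_apply, ht] at key
  have hmul : (π (φ t)).toAdd * (π (φ.symm t)).toAdd = 1 := by
    rw [mul_comm, ← smul_eq_mul, ← toAdd_zpow, ← key, toAdd_ofAdd]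
  rcases Int.eq_one_or_neg_one_of_mul_eq_one hmul with h1 | h1
  · left; rw [ht, ← h1, ofAdd_toAdd]
  · right; rw [ht, ← ofAdd_neg, ← h1, ofAdd_toAdd]

theorem comp_eq_self_of_map_apply_eq (ht : π t = ofAdd 1) (φ : G ≃* G)
    (h : π.ker ≤ (π.comp φ.toMonoidHom).ker) (hφt : π (φ t) = π t) :
    π.comp φ.toMonoidHom = π := by
  refine MonoidHom.ext fun g => ?_
  calc (π.comp φ.toMonoidHom) g = π (φ t) ^ (π g).toAdd := apply_eq_apply_zpow_of_ker_le ht h g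
    _ = π g := by rw [hφt, ← apply_eq_apply_zpow_of_ker_le ht le_rfl g]

theorem exists_lex_image_ne_of_map_apply_eq_inv (ht : π t = ofAdd 1) {Q : Set π.ker}
    (hQ : IsPositiveCone Q) (φ : G ≃* G) (hφt : π (φ t) = (π t)⁻¹) :
    ∃ P, IsPositiveCone P ∧ φ '' P ≠ P := by
  have hR := IsPositiveCone.setOf_one_lt (Multiplicative ℤ)
  have hφt_lt : π (φ t) < 1 := by
    rw [hφt, Left.inv_lt_one_iff, ht]
    exact Int.one_pos
  refine ⟨_, hR.lex hQ, Set.image_ne_of_mem_of_apply_notMem (a := t) (Or.inl ?_) ?_⟩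
  · rw [Set.mem_preimage, ht]
    exact Int.one_pos
  · rintro (h | ⟨k, -, hk⟩)
    · exact lt_asymm hφt_lt h
    · exact hφt_lt.ne (hk ▸ π.mem_ker.1 k.2)

theorem image_conjNormal_eq_iff {K : Subgroup G} [K.Normal] (Q : Set K) :
    ⇑(MulAut.conjNormal t) '' Q = Q ↔
      {x : G | ∃ k : K, k ∈ Q ∧ x = t * (k : G) * t⁻¹} = Subtype.val '' Q := by
  rw [← Subtype.val_injective.image_injective.eq_iff, Set.image_image]
  refine Eq.congr_left (Set.ext fun x => ?_)
  simp [MulAut.conjNormal_apply, eq_comm]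

theorem conjNormal_zpow_apply_mem_iff {K : Subgroup G} [K.Normal] {Q : Set K}
    (hQt : ⇑(MulAut.conjNormal t) '' Q = Q) (j : ℤ) (k : K) :
    MulAut.conjNormal (t ^ j) k ∈ Q ↔ k ∈ Q := by
  have hj : MulAut.conjNormal (H := K) (t ^ j) • Q = Q := by
    rw [map_zpow]
    exact (MulAction.stabilizer (MulAut K) Q).zpow_mem (MulAction.mem_stabilizer_iff.2 hQt) j
  have h := Set.smul_mem_smul_set_iff (a := MulAut.conjNormal (H := K) (t ^ j)) (s := Q) (x := k)
  rwa [hj] at h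

def kerDominantCone (ht : π t = ofAdd 1) (Q : Set π.ker) : Set G :=
  {g | kerPart ht g ∈ Q ∨ kerPart ht g = 1 ∧ 1 < π g}

theorem IsPositiveCone.kerDominantCone (ht : π t = ofAdd 1) {Q : Set π.ker}
    (hQ : IsPositiveCone Q) (hQt : ⇑(MulAut.conjNormal t) '' Q = Q) :
    IsPositiveCone (kerDominantCone ht Q) := by
  have hconj := conjNormal_zpow_apply_mem_iff hQt
  refine ⟨?_, fun g => ?_, ?_, ?_⟩
  · rintro a (ha | ⟨ha1, ha⟩) b (hb | ⟨hb1, hb⟩)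
    · exact Or.inl (by rw [kerPart_mul]; exact hQ.mul_mem ha ((hconj _ _).2 hb))
    · exact Or.inl (by rwa [kerPart_mul, hb1, map_one, mul_one])
    · exact Or.inl (by rw [kerPart_mul, ha1, one_mul]; exact (hconj _ _).2 hb)
    · exact Or.inr ⟨by rw [kerPart_mul, ha1, hb1, map_one, mul_one], by
        rw [map_mul]; exact one_lt_mul' ha hb⟩
  · rcases hQ.mem_or_inv_mem_or_eq_one (kerPart ht g) with h | h | h
    · exact Or.inl (Or.inl h)
    · exact Or.inr (Or.inl (Or.inl (by rw [kerPart_inv]; exact (hconj _ _).2 h)))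
    · rcases lt_trichotomy (π g) 1 with hg | hg | hg
      · exact Or.inr (Or.inl (Or.inr ⟨by rw [kerPart_inv, h, inv_one, map_one], by
          rw [map_inv]; exact Left.one_lt_inv_iff.2 hg⟩))
      · refine Or.inr (Or.inr ?_)
        rw [← kerPart_mul_zpow ht g, h, hg]
        simp
      · exact Or.inl (Or.inr ⟨h, hg⟩)
  · rintro g (hg | ⟨hg1, hg⟩) (hg' | ⟨hg'1, hg'⟩) <;> rw [kerPart_inv] at *
    · exact hQ.inv_notMem hg ((hconj _ _).1 hg')
    · rw [map_eq_one_iff _ (MulEquiv.injective _), inv_eq_one] at hg'1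
      exact hQ.one_notMem (hg'1 ▸ hg)
    · rw [hg1, inv_one] at hg'
      exact hQ.one_notMem ((hconj _ _).1 hg')
    · rw [map_inv] at hg'
      exact lt_asymm (Left.one_lt_inv_iff.1 hg') hg
  · rintro (h | ⟨-, h⟩)
    · exact hQ.one_notMem (kerPart_one ht ▸ h)
    · exact lt_irrefl _ (map_one π ▸ h)

theorem exists_kerDominantCone_image_ne (ht : π t = ofAdd 1) {Q : Set π.ker}
    (hQ : IsPositiveCone Q) (hQt : ⇑(MulAut.conjNormal t) '' Q = Q) (φ : G ≃* G)
    (hφ : φ ≠ MulEquiv.refl G) (hfix : ∀ k ∈ π.ker, φ k = k) (hφt : π (φ t) = π t) :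
    ∃ P, IsPositiveCone P ∧ φ '' P ≠ P := by
  set e : π.ker := ⟨φ t * t⁻¹, by simp [hφt]⟩
  have he : e ≠ 1 := by
    intro he
    apply hφ
    apply MulEquiv.toMonoidHom_injective
    refine MonoidHom.eq_of_eqOn_ker_of_apply_eq ht hfix ?_
    simpa [e, mul_inv_eq_one] using congrArg Subtype.val he
  obtain ⟨Q', hQ', hQ't, heQ'⟩ :
      ∃ Q', IsPositiveCone Q' ∧ ⇑(MulAut.conjNormal t) '' Q' = Q' ∧ e ∉ Q' := by
    by_cases h : e ∈ Q
    · exact ⟨Q⁻¹, hQ.inv, by rw [Set.image_inv, hQt], hQ.inv_notMem h⟩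
    · exact ⟨Q, hQ, hQt, h⟩
  have hφt_eq : φ t = e * t := by simp [e]
  refine ⟨_, hQ'.kerDominantCone ht hQ't, Set.image_ne_of_mem_of_apply_notMem (a := t) ?_ ?_⟩
  · refine Or.inr ⟨by simpa using kerPart_mul_self ht 1, ?_⟩
    rw [ht]; exact Int.one_pos
  · rintro (h | ⟨h, -⟩) <;> rw [hφt_eq, kerPart_mul_self] at h
    exacts [heQ' h, he h]

end ExtensionByZ

theorem aut_faithful_of_extension_by_Z_general {G : Type*} [Group G]
    (K : Subgroup G) (π : G →* Multiplicative ℤ)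
    (hker : π.ker = K)
    (hK : ∀ ψ : K ≃* K, ψ ≠ MulEquiv.refl K →
      ∃ Q : Set K, IsPositiveCone Q ∧ ⇑ψ '' Q ≠ Q)
    (t : G) (ht : π t = Multiplicative.ofAdd 1)
    (PK : Set K) (hPK : IsPositiveCone PK)
    (hconj : {x : G | ∃ k : K, k ∈ PK ∧ x = t * (k : G) * t⁻¹} = Subtype.val '' PK) :
    ∀ φ : G ≃* G, φ ≠ MulEquiv.refl G →
      ∃ P : Set G, IsPositiveCone P ∧ ⇑φ '' P ≠ P := by
  intro φ hφ
  subst hker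
  have hR := IsPositiveCone.setOf_one_lt (Multiplicative ℤ)
  by_cases hφker : π.ker ≤ (π.comp φ.toMonoidHom).ker
  swap
  · obtain ⟨g, hg, hφg⟩ := SetLike.not_le_iff_exists.1 hφker
    exact exists_lex_image_ne_of_not_mapsTo_ker hR hPK φ hg hφg
  rcases map_apply_eq_or_eq_inv ht φ hφker with hφt | hφt
  · have hmap := MonoidHom.map_ker_eq_of_comp_eq (comp_eq_self_of_map_apply_eq ht φ hφker hφt)
    by_cases hψ : φ.subgroupRestrict hmap = MulEquiv.refl _
    · have hfix (k : G) (hk : k ∈ π.ker) : φ k = k :=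
        (congrArg Subtype.val (DFunLike.congr_fun hψ ⟨k, hk⟩) :)
      exact exists_kerDominantCone_image_ne ht hPK ((image_conjNormal_eq_iff PK).2 hconj) φ hφ
        hfix hφt
    · obtain ⟨Q, hQ, hψQ⟩ := hK _ hψ
      exact ⟨_, hR.lex hQ, lex_image_ne_of_subgroupRestrict_image_ne hR φ hmap hψQ⟩
  · exact exists_lex_image_ne_of_map_apply_eq_inv ht hPK φ hφt

/-- Suppose `G` is left-orderable, `K ◁ G` with `G/K ≅ ℤ` via a surjection `π : G → ℤ`
with kernel `K`, `Aut(K)` acts faithfully on `LO(K)`, and conjugation by some `t`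
mapping to the generator of `ℤ` preserves a left-ordering of `K`.  Then `Aut(G)` acts
faithfully on `LO(G)`. -/
theorem aut_faithful_of_extension_by_Z {G : Type*} [Group G]
    (hLO : ∃ P : Set G, IsPositiveCone P)
    (K : Subgroup G) (π : G →* Multiplicative ℤ)
    (hsurj : Function.Surjective π) (hker : π.ker = K)
    (hK : ∀ ψ : K ≃* K, ψ ≠ MulEquiv.refl K →
      ∃ Q : Set K, IsPositiveCone Q ∧ ⇑ψ '' Q ≠ Q)
    (t : G) (ht : π t = Multiplicative.ofAdd 1)
    (PK : Set K) (hPK : IsPositiveCone PK)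
    (hconj : {x : G | ∃ k : K, k ∈ PK ∧ x = t * (k : G) * t⁻¹} = Subtype.val '' PK) :
    ∀ φ : G ≃* G, φ ≠ MulEquiv.refl G →
      ∃ P : Set G, IsPositiveCone P ∧ ⇑φ '' P ≠ P :=
  aut_faithful_of_extension_by_Z_general K π hker hK t ht PK hPK hconj
end

section
/- Let G be a bi-orderable group and let g ∈ G be a nonidentity element. Then the isolator I(g) is a relatively convex subgroup of G: there exists a positive cone P of G such that I(g) is a subgroup of G and is convex with respect to the left order determined by P. -/
/-- The isolator of the cyclic subgroup generated by `g`. -/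
def Isolator {G : Type*} [Group G] (g : G) : Set G :=
  {h : G | ∃ k : ℤ, k ≠ 0 ∧ h ^ k ∈ Subgroup.zpowers g}

/-- `S` is convex with respect to the left order determined by the positive cone `P`
(where `x < y` iff `x⁻¹ * y ∈ P`). -/
def IsConvex {G : Type*} [Group G] (P S : Set G) : Prop :=
  ∀ a ∈ S, ∀ b ∈ S, ∀ f : G, a⁻¹ * f ∈ P → f⁻¹ * b ∈ P → f ∈ S

/-!
Order `G` by a bi-invariant positive cone with `1 < g` (replace `g` by `g⁻¹` if needed). Let `C`
be the centralizer of `g`, `B ⊆ C` the elements lying between two powers of `g`, `D` the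
infinitesimals (all of whose powers stay below `g`), and `T ⊆ B` the elements having a power in
some coset `g ^ m * D`. Each subgroup in the chain `G ⊇ C ⊇ B ⊇ T ⊇ I(g)` carries an invariant
order on the cosets of the next one: on `G / C` compare `f * g * f⁻¹` with `g`; on `C / B` use the
given order, for which `B` is convex; on `B / T` use a Levi order, `B / T` being torsion-free and
abelian because commutators of `B` are infinitesimal (Hölder's argument); on `T / I(g)` use the
sign of the infinitesimal `d` in `x ^ k = g ^ m * d`. Stacking these coset orders on top of the
order of `I(g)` gives a left order in which `I(g)` is convex.
-/

open Set
open scoped commutatorElement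

/-- Adjoining `a` to `M` gives a larger subsemigroup, which by maximality contains `1`. -/
theorem exists_inv_pow_mem_of_maximal {A : Type*} [CommGroup A] [IsMulTorsionFree A] {M : Set A}
    (hM : Maximal (fun S : Set A => (∀ a ∈ S, ∀ b ∈ S, a * b ∈ S) ∧ (1 : A) ∉ S) M) {a : A}
    (ha : a ≠ 1) (haM : a ∉ M) : ∃ n : ℕ, a⁻¹ ^ (n + 1) ∈ M := by
  obtain ⟨⟨hMmul, hM1⟩, hmax⟩ := hM
  let M' : Set A := M ∪ {x | ∃ s ∈ insert 1 M, ∃ n : ℕ, x = s * a ^ (n + 1)}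
  have hM'mul : ∀ x ∈ M', ∀ y ∈ M', x * y ∈ M' := by
    rintro x (hx | ⟨s, hs, n, rfl⟩) y (hy | ⟨t, ht, m, rfl⟩)
    · exact .inl (hMmul x hx y hy)
    · refine .inr ⟨x * t, ?_, m, by rw [mul_assoc]⟩
      rcases ht with rfl | ht
      · simpa using .inr hx
      · exact .inr (hMmul x hx t ht)
    · refine .inr ⟨s * y, ?_, n, by rw [mul_right_comm]⟩
      rcases hs with rfl | hs
      · simpa using .inr hy
      · exact .inr (hMmul s hs y hy)
    · refine .inr ⟨s * t, ?_, n + m + 1, by rw [mul_mul_mul_comm, ← pow_add]; ring_nf⟩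
      rcases hs with rfl | hs
      · simpa using ht
      · rcases ht with rfl | ht
        · simpa using .inr hs
        · exact .inr (hMmul s hs t ht)
  have h1 : (1 : A) ∈ M' := by
    by_contra h1
    exact haM (hmax ⟨hM'mul, h1⟩ subset_union_left (.inr ⟨1, .inl rfl, 0, by simp⟩))
  rcases h1 with h1 | ⟨s, hs | hs, n, hsa⟩
  · exact absurd h1 hM1
  · exact absurd (by simpa [hs] using hsa.symm) ha
  · exact ⟨n, by rwa [inv_pow, inv_eq_of_mul_eq_one_left hsa.symm]⟩

/-- Levi's theorem: a maximal subsemigroup avoiding `1` is a positive cone. -/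
theorem IsMulTorsionFree.exists_isPositiveCone (A : Type*) [CommGroup A] [IsMulTorsionFree A] :
    ∃ P : Set A, IsPositiveCone P := by
  obtain ⟨M, hM⟩ := zorn_subset {S : Set A | (∀ a ∈ S, ∀ b ∈ S, a * b ∈ S) ∧ (1 : A) ∉ S}
    fun c hcF hc => by
      refine ⟨⋃₀ c, ⟨?_, fun ⟨S, hS, h1⟩ => (hcF hS).2 h1⟩, fun S hS => subset_sUnion_of_mem hS⟩
      rintro a ⟨S, hS, ha⟩ b ⟨T, hT, hb⟩
      rcases hc.total hS hT with hST | hTS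
      · exact ⟨T, hT, (hcF hT).1 a (hST ha) b hb⟩
      · exact ⟨S, hS, (hcF hS).1 a ha b (hTS hb)⟩
  obtain ⟨hMmul, hM1⟩ := hM.1
  have pow_mem {x : A} (hx : x ∈ M) (n : ℕ) : x ^ (n + 1) ∈ M := by
    induction n with
    | zero => simpa using hx
    | succ n ih => simpa [pow_succ] using hMmul _ ih x hx
  refine ⟨M, hMmul, fun a => ?_, fun a ha ha' => hM1 (by simpa using hMmul a ha _ ha'), hM1⟩
  by_contra! h
  obtain ⟨n, hn⟩ := exists_inv_pow_mem_of_maximal hM h.2.2 h.1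
  obtain ⟨m, hm⟩ := exists_inv_pow_mem_of_maximal hM (inv_ne_one.2 h.2.2) h.2.1
  apply hM1
  simpa [← pow_mul, mul_comm] using hMmul _ (pow_mem hn m) _ (pow_mem hm n)

section Group

variable {G : Type*} [Group G] {g x : G}

/-- `Q` is the positive cone of a `K`-invariant total order on the left cosets of `H` in `K`:
it consists of the `x ∈ K` with `H < x H`. -/
structure IsRelativeCone (K H Q : Set G) : Prop where
  subset : Q ⊆ K
  notMem : ∀ ⦃x⦄, x ∈ Q → x ∉ H
  mul_mem : ∀ ⦃a⦄, a ∈ Q → ∀ ⦃b⦄, b ∈ Q → a * b ∈ Q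
  mul_mem_left : ∀ ⦃h⦄, h ∈ H → ∀ ⦃a⦄, a ∈ Q → h * a ∈ Q
  mul_mem_right : ∀ ⦃a⦄, a ∈ Q → ∀ ⦃h⦄, h ∈ H → a * h ∈ Q
  mem_or_inv_mem : ∀ ⦃x⦄, x ∈ K → x ∉ H → x ∈ Q ∨ x⁻¹ ∈ Q

namespace IsRelativeCone

variable {L K H Q Q' : Set G}

theorem union (hQ : IsRelativeCone L K Q) (hQ' : IsRelativeCone K H Q') (hHK : H ⊆ K)
    (hKL : K ⊆ L) : IsRelativeCone L H (Q ∪ Q') where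
  subset := union_subset hQ.subset (hQ'.subset.trans hKL)
  notMem x hx hxH := hx.elim (fun hx => hQ.notMem hx (hHK hxH)) (fun hx => hQ'.notMem hx hxH)
  mul_mem a ha b hb := by
    rcases ha with ha | ha <;> rcases hb with hb | hb
    · exact .inl (hQ.mul_mem ha hb)
    · exact .inl (hQ.mul_mem_right ha (hQ'.subset hb))
    · exact .inl (hQ.mul_mem_left (hQ'.subset ha) hb)
    · exact .inr (hQ'.mul_mem ha hb)
  mul_mem_left h hh a ha :=
    ha.elim (fun ha => .inl (hQ.mul_mem_left (hHK hh) ha)) (fun ha => .inr (hQ'.mul_mem_left hh ha))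
  mul_mem_right a ha h hh :=
    ha.elim (fun ha => .inl (hQ.mul_mem_right ha (hHK hh)))
      (fun ha => .inr (hQ'.mul_mem_right ha hh))
  mem_or_inv_mem x hxL hxH := by
    by_cases hxK : x ∈ K
    · exact (hQ'.mem_or_inv_mem hxK hxH).imp .inr .inr
    · exact (hQ.mem_or_inv_mem hxL hxK).imp .inl .inl

theorem isPositiveCone {P : Set G} (hP : IsRelativeCone univ {1} P) : IsPositiveCone P := by
  have hone : (1 : G) ∉ P := fun h => hP.notMem h rfl
  refine ⟨fun a ha b hb => hP.mul_mem ha hb, fun x => ?_, fun x hx hx' => ?_, hone⟩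
  · by_cases hx : x = 1
    · exact .inr (.inr hx)
    · exact (hP.mem_or_inv_mem (mem_univ x) hx).imp_right .inl
  · exact hone (by simpa using hP.mul_mem hx hx')

theorem isConvex {H : Subgroup G} {P : Set G} (hQ : IsRelativeCone univ H Q) (hP : P ⊆ H) :
    IsConvex (Q ∪ P) H := by
  intro a ha b hb f haf hfb
  rcases haf with haf | haf
  · exfalso
    rcases hfb with hfb | hfb
    · exact hQ.notMem (by simpa [mul_assoc] using hQ.mul_mem haf hfb) (H.mul_mem (H.inv_mem ha) hb)
    · have hf : f ∈ H := by simpa using H.mul_mem hb (H.inv_mem (hP hfb))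
      exact hQ.notMem haf (H.mul_mem (H.inv_mem ha) hf)
  · simpa using H.mul_mem ha (hP haf)

end IsRelativeCone

theorem isRelativeCone_of_isPositiveCone_quotient {K N : Subgroup G} (hNK : N ≤ K)
    [(N.subgroupOf K).Normal] {P : Set (K ⧸ N.subgroupOf K)} (hP : IsPositiveCone P) :
    IsRelativeCone (K : Set G) N ((↑) '' ((↑) ⁻¹' P : Set K)) := by
  obtain ⟨hPmul, hPtot, -, hP1⟩ := hP
  have mk_eq_one {x : K} (hx : (x : G) ∈ N) : (x : K ⧸ N.subgroupOf K) = 1 :=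
    (QuotientGroup.eq_one_iff x).2 (Subgroup.mem_subgroupOf.2 hx)
  refine ⟨?_, ?_, ?_, ?_, ?_, fun x hxK hxN => ?_⟩
  · rintro _ ⟨x, -, rfl⟩
    exact x.2
  · rintro _ ⟨x, hx, rfl⟩ hxN
    exact hP1 (by simpa [mk_eq_one hxN] using hx)
  · rintro _ ⟨x, hx, rfl⟩ _ ⟨y, hy, rfl⟩
    exact ⟨x * y, hPmul _ hx _ hy, rfl⟩
  · rintro h hh _ ⟨x, hx, rfl⟩
    exact ⟨⟨h, hNK hh⟩ * x, by simpa [mk_eq_one (x := ⟨h, hNK hh⟩) hh] using hx, rfl⟩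
  · rintro _ ⟨x, hx, rfl⟩ h hh
    exact ⟨x * ⟨h, hNK hh⟩, by simpa [mk_eq_one (x := ⟨h, hNK hh⟩) hh] using hx, rfl⟩
  · rcases hPtot (⟨x, hxK⟩ : K) with h | h | h
    · exact .inl ⟨⟨x, hxK⟩, h, rfl⟩
    · exact .inr ⟨⟨x, hxK⟩⁻¹, h, rfl⟩
    · exact absurd (Subgroup.mem_subgroupOf.1 ((QuotientGroup.eq_one_iff _).1 h)) hxN

theorem exists_isRelativeCone_of_commutator_mem {K N : Subgroup G} (hNK : N ≤ K)
    (hcomm : ∀ u ∈ K, ∀ v ∈ K, ⁅u, v⁆ ∈ N)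
    (hroot : ∀ x ∈ K, ∀ n : ℕ, n ≠ 0 → x ^ n ∈ N → x ∈ N) :
    ∃ Q, IsRelativeCone (K : Set G) N Q := by
  let N' := N.subgroupOf K
  have mem_N' (x : K) : x ∈ N' ↔ (x : G) ∈ N := Subgroup.mem_subgroupOf
  have : N'.Normal := ⟨fun n hn k => by
    rw [mem_N'] at hn ⊢
    have : (k * n * k⁻¹ : K) = (⁅(k : G), (n : G)⁆ * n : G) := by push_cast; group
    rw [this]
    exact N.mul_mem (hcomm k k.2 n n.2) hn⟩
  let : CommGroup (K ⧸ N') :=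
    { (inferInstance : Group (K ⧸ N')) with
      mul_comm := fun a b => by
        induction a using QuotientGroup.induction_on with | H a => ?_
        induction b using QuotientGroup.induction_on with | H b => ?_
        rw [← QuotientGroup.mk_mul, ← QuotientGroup.mk_mul, QuotientGroup.eq, mem_N']
        have : ((a * b)⁻¹ * (b * a) : K) = (⁅(b : G)⁻¹, (a : G)⁻¹⁆ : G) := by push_cast; group
        rw [this]
        exact hcomm _ (K.inv_mem b.2) _ (K.inv_mem a.2) }
  have : IsMulTorsionFree (K ⧸ N') := IsMulTorsionFree.of_not_isOfFinOrder fun a ha hfin => by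
    induction a using QuotientGroup.induction_on with | H a => ?_
    obtain ⟨n, hn, han⟩ := isOfFinOrder_iff_pow_eq_one.1 hfin
    rw [← QuotientGroup.mk_pow, QuotientGroup.eq_one_iff, mem_N'] at han
    exact ha ((QuotientGroup.eq_one_iff a).2 ((mem_N' a).2 (hroot a a.2 n hn.ne' han)))
  obtain ⟨P, hP⟩ := IsMulTorsionFree.exists_isPositiveCone (K ⧸ N')
  exact ⟨_, isRelativeCone_of_isPositiveCone_quotient hNK hP⟩

theorem mem_isolator_iff : x ∈ Isolator g ↔ ∃ k : ℕ, k ≠ 0 ∧ ∃ m : ℤ, x ^ k = g ^ m := by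
  simp only [Isolator, Set.mem_ofPred_eq, Subgroup.mem_zpowers_iff]
  constructor
  · rintro ⟨k, hk, m, hm⟩
    obtain ⟨n, rfl | rfl⟩ := Int.eq_nat_or_neg k
    · exact ⟨n, by simpa using hk, m, by rw [← zpow_natCast, hm]⟩
    · exact ⟨n, by simpa using hk, -m, by rw [← zpow_natCast, zpow_neg, hm, zpow_neg, inv_inv]⟩
  · rintro ⟨k, hk, m, hm⟩
    exact ⟨k, Int.natCast_ne_zero.2 hk, m, by rw [zpow_natCast, hm]⟩

theorem isolator_inv (g : G) : Isolator g⁻¹ = Isolator g := by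
  simp [Isolator]

theorem Commute.of_pow_eq_zpow_mul (hx : Commute x g) {k : ℕ} {m : ℤ} {d : G}
    (h : x ^ k = g ^ m * d) : Commute d g := by
  rw [eq_inv_mul_of_mul_eq h.symm]
  exact ((Commute.refl g).zpow_left m).inv_left.mul_left (hx.pow_left k)

theorem pow_mul_eq_zpow_mul_pow {k : ℕ} {m : ℤ} {d : G} (hd : Commute d g)
    (h : x ^ k = g ^ m * d) (j : ℕ) : x ^ (k * j) = g ^ (m * j) * d ^ j := by
  rw [pow_mul, h, ((hd.zpow_right m).symm).mul_pow, zpow_mul, zpow_natCast]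

theorem inv_pow_eq_zpow_mul_inv (hx : Commute x g) {k : ℕ} {m : ℤ} {d : G}
    (h : x ^ k = g ^ m * d) : x⁻¹ ^ k = g ^ (-m) * d⁻¹ := by
  rw [inv_pow, h, mul_inv_rev, zpow_neg, ((hx.of_pow_eq_zpow_mul h).zpow_right m).inv_inv.eq]

end Group

section Ordered

variable {G : Type*} [Group G] [LinearOrder G] {g x : G}

def infinitesimals (g : G) : Set G := {x | ∀ n : ℤ, x ^ n < g}

theorem one_mem_infinitesimals (hg : 1 < g) : (1 : G) ∈ infinitesimals g := fun n => by
  simpa using hg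

theorem zpow_mem_infinitesimals (hx : x ∈ infinitesimals g) (m : ℤ) :
    x ^ m ∈ infinitesimals g := fun n => by
  simpa [← zpow_mul] using hx (m * n)

theorem pow_mem_infinitesimals (hx : x ∈ infinitesimals g) (n : ℕ) :
    x ^ n ∈ infinitesimals g := by
  simpa using zpow_mem_infinitesimals hx n

theorem inv_mem_infinitesimals (hx : x ∈ infinitesimals g) : x⁻¹ ∈ infinitesimals g := by
  simpa using zpow_mem_infinitesimals hx (-1)

end Ordered

section LeftOrdered

variable {G : Type*} [Group G] [LinearOrder G] [MulLeftMono G] {g : G}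

theorem isRelativeCone_of_convex {K H : Subgroup G} (hHK : H ≤ K)
    (hconv : ∀ a ∈ H, ∀ b ∈ H, ∀ x ∈ K, a ≤ x → x ≤ b → x ∈ H) :
    IsRelativeCone (K : Set G) H {x | x ∈ K ∧ x ∉ H ∧ 1 < x} := by
  have not_le_mem {x : G} (hxK : x ∈ K) (hxH : x ∉ H) (hx : 1 < x) {h : G} (hh : h ∈ H) :
      ¬ x ≤ h := fun hle => hxH (hconv 1 H.one_mem h hh x hxK hx.le hle)
  refine ⟨fun x hx => hx.1, fun x hx => hx.2.1, fun a ha b hb => ?_, fun h hh a ha => ?_,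
    fun a ha h hh => ?_, fun x hxK hxH => ?_⟩
  · have hab : a < a * b := lt_mul_of_one_lt_right' a hb.2.2
    refine ⟨K.mul_mem ha.1 hb.1, fun habH => ?_, ha.2.2.trans hab⟩
    exact not_le_mem ha.1 ha.2.1 ha.2.2 habH hab.le
  · refine ⟨K.mul_mem (hHK hh) ha.1, fun hH => ha.2.1 (by simpa using H.mul_mem (H.inv_mem hh) hH),
      not_le.1 fun hle => not_le_mem ha.1 ha.2.1 ha.2.2 (H.inv_mem hh) ?_⟩
    simpa using mul_le_mul_right hle h⁻¹
  · refine ⟨K.mul_mem ha.1 (hHK hh), fun hH => ha.2.1 (by simpa using H.mul_mem hH (H.inv_mem hh)),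
      not_le.1 fun hle => ha.2.1 ?_⟩
    have hle' : h ≤ a⁻¹ := by simpa using mul_le_mul_right hle a⁻¹
    have ha1 : a⁻¹ ≤ 1 := by simpa using mul_le_mul_right ha.2.2.le a⁻¹
    simpa using H.inv_mem (hconv h hh 1 H.one_mem a⁻¹ (K.inv_mem ha.1) hle' ha1)
  · rcases lt_trichotomy 1 x with hx | rfl | hx
    · exact .inl ⟨hxK, hxH, hx⟩
    · exact absurd H.one_mem hxH
    · refine .inr ⟨K.inv_mem hxK, fun h => hxH (by simpa using H.inv_mem h), ?_⟩
      simpa using mul_lt_mul_right hx x⁻¹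

theorem zpow_right_strictMono' (hg : 1 < g) : StrictMono fun n : ℤ => g ^ n :=
  strictMono_int_of_lt_succ fun n => by
    simpa [zpow_add_one] using lt_mul_of_one_lt_right' (g ^ n) hg

theorem eq_zero_of_zpow_mem_infinitesimals (hg : 1 < g) {m : ℤ}
    (h : g ^ m ∈ infinitesimals g) : m = 0 := by
  have h₁ : g ^ m < g ^ (1 : ℤ) := by simpa using h 1
  have h₂ : g ^ (-m) < g ^ (1 : ℤ) := by simpa [← zpow_mul] using h (-1)
  rw [(zpow_right_strictMono' hg).lt_iff_lt] at h₁ h₂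
  omega

end LeftOrdered

section BiOrdered

variable {G : Type*} [Group G] [LinearOrder G] [MulLeftMono G] [MulRightMono G] {g x y : G}

theorem Commute.of_pow_left {k : ℕ} (hk : k ≠ 0) (h : Commute (x ^ k) y) : Commute x y := by
  have : (y * x * y⁻¹) ^ k = x ^ k := by rw [conj_pow, h.symm.eq, mul_inv_cancel_right]
  have := pow_left_injective hk this
  rw [Commute, SemiconjBy]
  nth_rw 1 [← this]
  group

theorem commute_of_mem_isolator (hx : x ∈ Isolator g) (hy : Commute y g) : Commute x y := by
  obtain ⟨k, hk, m, hm⟩ := mem_isolator_iff.1 hx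
  exact Commute.of_pow_left hk (hm ▸ (hy.zpow_right m).symm)

def isolatorSubgroup (g : G) : Subgroup G where
  carrier := Isolator g
  one_mem' := mem_isolator_iff.2 ⟨1, one_ne_zero, 0, by simp⟩
  mul_mem' {x y} hx hy := by
    obtain ⟨k, hk, m, hm⟩ := mem_isolator_iff.1 hx
    obtain ⟨l, hl, n, hn⟩ := mem_isolator_iff.1 hy
    have hxy : Commute x y := commute_of_mem_isolator hx (commute_of_mem_isolator hy (.refl g))
    refine mem_isolator_iff.2 ⟨k * l, mul_ne_zero hk hl, m * l + n * k, ?_⟩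
    rw [hxy.mul_pow, zpow_add, zpow_mul, zpow_mul, zpow_natCast, zpow_natCast, ← hm, ← hn,
      ← pow_mul, ← pow_mul, mul_comm l]
  inv_mem' {x} hx := by
    obtain ⟨k, hk, m, hm⟩ := mem_isolator_iff.1 hx
    exact mem_isolator_iff.2 ⟨k, hk, -m, by rw [inv_pow, hm, zpow_neg]⟩

theorem isRelativeCone_centralizer (g : G) :
    IsRelativeCone univ (Subgroup.centralizer {g} : Set G) {f | g < f * g * f⁻¹} := by
  have conj_eq {f : G} (hf : f ∈ Subgroup.centralizer {g}) : f * g * f⁻¹ = g := by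
    rw [Subgroup.mem_centralizer_singleton_iff.1 hf, mul_inv_cancel_right]
  refine ⟨subset_univ _, fun f hf hfC => ?_, fun a ha b hb => ?_, fun h hh f hf => ?_,
    fun f hf h hh => ?_, fun f _ hfC => ?_⟩
  · change g < f * g * f⁻¹ at hf
    rw [conj_eq hfC] at hf
    exact hf.false
  · calc g < a * g * a⁻¹ := ha
      _ < a * (b * g * b⁻¹) * a⁻¹ := by gcongr; exact hb
      _ = a * b * g * (a * b)⁻¹ := by group
  · calc g = h * g * h⁻¹ := (conj_eq hh).symm
      _ < h * (f * g * f⁻¹) * h⁻¹ := by gcongr; exact hf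
      _ = h * f * g * (h * f)⁻¹ := by group
  · calc g < f * g * f⁻¹ := hf
      _ = f * (h * g * h⁻¹) * f⁻¹ := by rw [conj_eq hh]
      _ = f * h * g * (f * h)⁻¹ := by group
  · have hne : f * g * f⁻¹ ≠ g := fun h => hfC <| Subgroup.mem_centralizer_singleton_iff.2 <| by
      rw [← mul_inv_eq_iff_eq_mul, h]
    rcases hne.lt_or_gt with hlt | hgt
    · right
      calc g = f⁻¹ * (f * g * f⁻¹) * f⁻¹⁻¹ := by group
        _ < f⁻¹ * g * f⁻¹⁻¹ := by gcongr
    · exact .inl hgt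

def zpowersHull (g : G) : Subgroup G where
  carrier := {x | ∃ a b : ℤ, g ^ a ≤ x ∧ x ≤ g ^ b}
  one_mem' := ⟨0, 0, by simp, by simp⟩
  mul_mem' := by
    rintro x y ⟨a, b, hax, hxb⟩ ⟨c, d, hcy, hyd⟩
    exact ⟨a + c, b + d, by rw [zpow_add]; exact mul_le_mul' hax hcy,
      by rw [zpow_add]; exact mul_le_mul' hxb hyd⟩
  inv_mem' := by
    rintro x ⟨a, b, hax, hxb⟩
    exact ⟨-b, -a, by simpa [zpow_neg] using hxb, by simpa [zpow_neg] using hax⟩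

theorem mem_zpowersHull_of_le_of_le {a b : G} (ha : a ∈ zpowersHull g) (hb : b ∈ zpowersHull g)
    (hax : a ≤ x) (hxb : x ≤ b) : x ∈ zpowersHull g := by
  obtain ⟨m, -, hma, -⟩ := ha
  obtain ⟨-, n, -, hbn⟩ := hb
  exact ⟨m, n, hma.trans hax, hxb.trans hbn⟩

theorem mem_zpowersHull_of_pow_eq (hg : 1 < g) {k : ℕ} (hk : k ≠ 0) {m : ℤ}
    (h : x ^ k = g ^ m) : x ∈ zpowersHull g := by
  have le_of_pow_eq {y : G} {m : ℤ} (h : y ^ k = g ^ m) : y ≤ g ^ |m| := not_lt.1 fun hlt => by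
    have := pow_lt_pow_left' hk hlt
    rw [h, ← zpow_natCast, ← zpow_mul, (zpow_right_strictMono' hg).lt_iff_lt] at this
    have : |m| ≤ |m| * k := le_mul_of_one_le_right (abs_nonneg m) (by omega)
    linarith [le_abs_self m]
  refine ⟨-|m|, |m|, ?_, le_of_pow_eq h⟩
  have hinv : x⁻¹ ^ k = g ^ (-m) := by rw [inv_pow, h, zpow_neg]
  simpa [zpow_neg] using inv_le'.1 (le_of_pow_eq hinv)

theorem exists_pow_mem_Icc_zpow (hg : 1 < g) (hx : x ∈ zpowersHull g) (k : ℕ) :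
    ∃ a : ℤ, x ^ k ∈ Icc (g ^ a) (g ^ (a + 1)) := by
  obtain ⟨a, b, hax, hxb⟩ := hx
  have hmono := zpow_right_strictMono' hg
  have hlow : g ^ (a * k) ≤ x ^ k := by simpa [zpow_mul] using pow_le_pow_left' hax k
  have hup : x ^ k ≤ g ^ (b * k) := by simpa [zpow_mul] using pow_le_pow_left' hxb k
  obtain ⟨c, hc, hmax⟩ := Int.exists_greatest_of_bdd (P := fun c => g ^ c ≤ x ^ k)
    ⟨b * k, fun c hc => hmono.le_iff_le.1 (hc.trans hup)⟩ ⟨a * k, hlow⟩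
  exact ⟨c, hc, not_lt.1 fun h => by linarith [hmax _ h.le]⟩

def boundedCentralizer (g : G) : Subgroup G := Subgroup.centralizer {g} ⊓ zpowersHull g

theorem commute_of_mem_boundedCentralizer (hx : x ∈ boundedCentralizer g) : Commute x g :=
  Subgroup.mem_centralizer_singleton_iff.1 hx.1

theorem conj_mem_infinitesimals {z : G} (hz : Commute z g) (hx : x ∈ infinitesimals g) :
    z * x * z⁻¹ ∈ infinitesimals g := fun n => by
  rw [conj_zpow]
  calc z * x ^ n * z⁻¹ < z * g * z⁻¹ := by gcongr; exact hx n
    _ = g := by rw [hz.eq, mul_inv_cancel_right]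

theorem pow_lt_of_le_mem_infinitesimals (hg : 1 < g) {b : G} (hb : b ∈ infinitesimals g)
    (hxb : x ≤ b) (k : ℕ) : x ^ k < g := by
  rcases le_total x 1 with hx | hx
  · exact (pow_le_one' hx k).trans_lt hg
  · exact (pow_le_pow_left' hxb k).trans_lt (by simpa using hb k)

theorem mem_infinitesimals_of_le_of_le (hg : 1 < g) {a b : G} (ha : a ∈ infinitesimals g)
    (hb : b ∈ infinitesimals g) (hax : a ≤ x) (hxb : x ≤ b) : x ∈ infinitesimals g := by
  intro n
  obtain ⟨k, rfl | rfl⟩ := Int.eq_nat_or_neg n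
  · simpa using pow_lt_of_le_mem_infinitesimals hg hb hxb k
  · simpa using pow_lt_of_le_mem_infinitesimals hg (inv_mem_infinitesimals ha)
      (inv_le_inv_iff.2 hax) k

theorem mul_mem_infinitesimals (hg : 1 < g) (hx : x ∈ infinitesimals g)
    (hy : y ∈ infinitesimals g) : x * y ∈ infinitesimals g := by
  have max_mem {a b : G} (ha : a ∈ infinitesimals g) (hb : b ∈ infinitesimals g) :
      max a b ∈ infinitesimals g := by
    rcases max_choice a b with h | h <;> rw [h] <;> assumption
  set M := max (max x x⁻¹) (max y y⁻¹)
  have hM : M ∈ infinitesimals g := max_mem (max_mem hx (inv_mem_infinitesimals hx))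
    (max_mem hy (inv_mem_infinitesimals hy))
  refine mem_infinitesimals_of_le_of_le hg (zpow_mem_infinitesimals hM (-2))
    (zpow_mem_infinitesimals hM 2) ?_ ?_
  · calc M ^ (-2 : ℤ) = M⁻¹ * M⁻¹ := by group
      _ ≤ x * y := mul_le_mul' (inv_le'.1 (by simp [M])) (inv_le'.1 (by simp [M]))
  · calc x * y ≤ M * M := mul_le_mul' (by simp [M]) (by simp [M])
      _ = M ^ (2 : ℤ) := (zpow_two M).symm

theorem mem_infinitesimals_of_pow_mem_Icc (hg : 1 < g) {c : ℤ}
    (h : ∀ k : ℕ, x ^ k ∈ Icc (g ^ (-c)) (g ^ c)) : x ∈ infinitesimals g := by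
  have hle (m : ℤ) : x ^ m ≤ g ^ c := by
    obtain ⟨k, rfl | rfl⟩ := Int.eq_nat_or_neg m
    · simpa using (h k).2
    · simpa using inv_le_inv_iff.2 (h k).1
  intro n
  by_contra! hgn
  have hpow : g ^ (c.toNat + 1) ≤ x ^ (n * (c.toNat + 1 : ℕ)) := by
    rw [zpow_mul, zpow_natCast]
    exact pow_le_pow_left' hgn _
  have hlt : g ^ c < g ^ (c.toNat + 1) := by
    rw [← zpow_natCast]
    exact zpow_right_strictMono' hg (by omega)
  exact (hpow.trans (hle _)).not_gt hlt

theorem exists_conj_mul_pow_le (x y : G) (k : ℕ) :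
    ∃ i : ℕ, y ^ i * x ^ k * (y ^ i)⁻¹ * y ^ k ≤ (x * y) ^ k := by
  have key {z : G} (n : ℕ) (hz : ∀ i < n, z ≤ y ^ i * x * (y ^ i)⁻¹) :
      z ^ n * y ^ n ≤ (x * y) ^ n := by
    induction n with
    | zero => simp
    | succ n ih =>
      calc z ^ (n + 1) * y ^ (n + 1) = z ^ n * z * (y ^ n * y) := by rw [pow_succ, pow_succ]
        _ ≤ z ^ n * (y ^ n * x * (y ^ n)⁻¹) * (y ^ n * y) := by gcongr; exact hz n n.lt_succ_self
        _ = z ^ n * y ^ n * (x * y) := by group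
        _ ≤ (x * y) ^ n * (x * y) := by gcongr; exact ih fun i hi => hz i (by omega)
        _ = (x * y) ^ (n + 1) := (pow_succ _ _).symm
  rcases Nat.eq_zero_or_pos k with rfl | hk
  · exact ⟨0, by simp⟩
  obtain ⟨i, -, hi⟩ := (Finset.range k).exists_min_image (fun i => y ^ i * x * (y ^ i)⁻¹)
    (Finset.nonempty_range_iff.2 hk.ne')
  exact ⟨i, by simpa [conj_pow] using key k fun j hj => hi j (Finset.mem_range.2 hj)⟩

theorem exists_mul_pow_le_conj_mul_pow (x y : G) (k : ℕ) :
    ∃ i : ℕ, (x * y) ^ k ≤ y ^ i * x ^ k * (y ^ i)⁻¹ * y ^ k :=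
  exists_conj_mul_pow_le (G := Gᵒᵈ) x y k

theorem mul_pow_mem_Icc (hy : Commute y g) {k : ℕ} {a a' b b' : ℤ}
    (hx : x ^ k ∈ Icc (g ^ a) (g ^ a')) (hy' : y ^ k ∈ Icc (g ^ b) (g ^ b')) :
    (x * y) ^ k ∈ Icc (g ^ (a + b)) (g ^ (a' + b')) := by
  have conj_eq (i : ℕ) (c : ℤ) : y ^ i * g ^ c * (y ^ i)⁻¹ = g ^ c := by
    rw [((hy.pow_left i).zpow_right c).eq, mul_inv_cancel_right]
  obtain ⟨i, hi⟩ := exists_conj_mul_pow_le x y k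
  obtain ⟨j, hj⟩ := exists_mul_pow_le_conj_mul_pow x y k
  constructor
  · calc g ^ (a + b) = y ^ i * g ^ a * (y ^ i)⁻¹ * g ^ b := by rw [conj_eq, zpow_add]
      _ ≤ y ^ i * x ^ k * (y ^ i)⁻¹ * y ^ k := by gcongr; exacts [hx.1, hy'.1]
      _ ≤ (x * y) ^ k := hi
  · calc (x * y) ^ k ≤ y ^ j * x ^ k * (y ^ j)⁻¹ * y ^ k := hj
      _ ≤ y ^ j * g ^ a' * (y ^ j)⁻¹ * g ^ b' := by gcongr; exacts [hx.2, hy'.2]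
      _ = g ^ (a' + b') := by rw [conj_eq, zpow_add]

theorem inv_pow_mem_Icc {k : ℕ} {a b : ℤ} (h : x ^ k ∈ Icc (g ^ a) (g ^ b)) :
    x⁻¹ ^ k ∈ Icc (g ^ (-b)) (g ^ (-a)) := by
  simpa [inv_pow, zpow_neg, and_comm] using h

/-- Hölder: in `boundedCentralizer g` the `k`-th power of every element lies between two
consecutive powers of `g`, hence the `k`-th power of a commutator between `g⁻²` and `g²`. -/
theorem commutator_mem_infinitesimals (hg : 1 < g) {u v : G} (hu : u ∈ boundedCentralizer g)
    (hv : v ∈ boundedCentralizer g) : ⁅u, v⁆ ∈ infinitesimals g := by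
  have hug := commute_of_mem_boundedCentralizer hu
  have hvg := commute_of_mem_boundedCentralizer hv
  refine mem_infinitesimals_of_pow_mem_Icc hg (c := 2) fun k => ?_
  obtain ⟨a, ha⟩ := exists_pow_mem_Icc_zpow hg hu.2 k
  obtain ⟨b, hb⟩ := exists_pow_mem_Icc_zpow hg hv.2 k
  have h := mul_pow_mem_Icc (hug.inv_left.mul_left hvg.inv_left) (mul_pow_mem_Icc hvg ha hb)
    (mul_pow_mem_Icc hvg.inv_left (inv_pow_mem_Icc ha) (inv_pow_mem_Icc hb))
  rw [show a + b + (-(a + 1) + -(b + 1)) = -2 by ring,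
    show a + 1 + (b + 1) + (-a + -b) = 2 by ring, ← mul_assoc] at h
  simpa [commutatorElement_def] using h

/-- `(x * y) ^ k` lies between `y ^ i * x ^ k * y ^ (-i) * y ^ k` for two values of `i`, and
conjugating `x ^ k = g ^ a * d` by `y ^ i` only conjugates `d`. -/
theorem exists_mul_pow_eq_zpow_mul (hg : 1 < g) (hx : Commute x g) (hy : Commute y g) {k : ℕ}
    {a b : ℤ} {d e : G} (hd : d ∈ infinitesimals g) (he : e ∈ infinitesimals g)
    (hxk : x ^ k = g ^ a * d) (hyk : y ^ k = g ^ b * e) :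
    ∃ f ∈ infinitesimals g, (x * y) ^ k = g ^ (a + b) * f ∧ (1 < d → 1 ≤ e → 1 < f) := by
  have hdg := hx.of_pow_eq_zpow_mul hxk
  have conj_mul_pow (i : ℕ) : y ^ i * x ^ k * (y ^ i)⁻¹ * y ^ k =
      g ^ (a + b) * (y ^ i * d * (y ^ i)⁻¹ * e) := by
    have hconj : Commute (y ^ i * d * (y ^ i)⁻¹) g :=
      ((hy.pow_left i).mul_left hdg).mul_left (hy.pow_left i).inv_left
    calc y ^ i * x ^ k * (y ^ i)⁻¹ * y ^ k
        = (y ^ i * g ^ a * (y ^ i)⁻¹) * (y ^ i * d * (y ^ i)⁻¹) * g ^ b * e := by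
          rw [hxk, hyk]; group
      _ = g ^ a * (g ^ b * (y ^ i * d * (y ^ i)⁻¹)) * e := by
          rw [((hy.pow_left i).zpow_right a).eq, mul_inv_cancel_right, mul_assoc (g ^ a),
            (hconj.zpow_right b).eq]
      _ = g ^ (a + b) * (y ^ i * d * (y ^ i)⁻¹ * e) := by rw [zpow_add]; group
  have conj_mem (i : ℕ) : y ^ i * d * (y ^ i)⁻¹ * e ∈ infinitesimals g :=
    mul_mem_infinitesimals hg (conj_mem_infinitesimals (hy.pow_left i) hd) he
  obtain ⟨i, hi⟩ := exists_conj_mul_pow_le x y k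
  obtain ⟨j, hj⟩ := exists_mul_pow_le_conj_mul_pow x y k
  set f := (g ^ (a + b))⁻¹ * (x * y) ^ k
  have hxy : (x * y) ^ k = g ^ (a + b) * f := (mul_inv_cancel_left _ _).symm
  rw [conj_mul_pow, hxy, mul_le_mul_iff_left] at hi hj
  refine ⟨f, mem_infinitesimals_of_le_of_le hg (conj_mem i) (conj_mem j) hi hj, hxy,
    fun hd1 he1 => lt_of_lt_of_le ?_ hi⟩
  refine one_lt_mul_of_lt_of_le' ?_ he1
  calc 1 = y ^ i * 1 * (y ^ i)⁻¹ := by group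
    _ < y ^ i * d * (y ^ i)⁻¹ := by gcongr

theorem exists_mul_pow_mul_eq_zpow_mul (hg : 1 < g) (hx : Commute x g) (hy : Commute y g)
    {k l : ℕ} (hl : l ≠ 0) {m n : ℤ} {d e : G} (hd : d ∈ infinitesimals g)
    (he : e ∈ infinitesimals g) (hxk : x ^ k = g ^ m * d) (hyl : y ^ l = g ^ n * e) :
    ∃ f ∈ infinitesimals g, (x * y) ^ (k * l) = g ^ (m * l + n * k) * f ∧
      (1 < d → 1 ≤ e → 1 < f) := by
  have hykl := pow_mul_eq_zpow_mul_pow (hy.of_pow_eq_zpow_mul hyl) hyl k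
  rw [mul_comm l] at hykl
  obtain ⟨f, hf, hxy, hf1⟩ := exists_mul_pow_eq_zpow_mul hg hx hy (pow_mem_infinitesimals hd l)
    (pow_mem_infinitesimals he k) (pow_mul_eq_zpow_mul_pow (hx.of_pow_eq_zpow_mul hxk) hxk l) hykl
  exact ⟨f, hf, hxy, fun hd1 he1 => hf1 (one_lt_pow' hd1 hl) (one_le_pow_of_one_le' he1 k)⟩

/-- The elements of `boundedCentralizer g` whose ratio to `g` is rational up to an
infinitesimal. -/
def rationalPart (hg : 1 < g) : Subgroup G where
  carrier := {x | x ∈ boundedCentralizer g ∧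
    ∃ k : ℕ, k ≠ 0 ∧ ∃ m : ℤ, ∃ d ∈ infinitesimals g, x ^ k = g ^ m * d}
  one_mem' := ⟨Subgroup.one_mem _, 1, one_ne_zero, 0, 1, one_mem_infinitesimals hg, by simp⟩
  mul_mem' := by
    rintro x y ⟨hx, k, hk, m, d, hd, hxk⟩ ⟨hy, l, hl, n, e, he, hyl⟩
    obtain ⟨f, hf, hxy, -⟩ := exists_mul_pow_mul_eq_zpow_mul hg
      (commute_of_mem_boundedCentralizer hx) (commute_of_mem_boundedCentralizer hy) hl hd he hxk hyl
    exact ⟨Subgroup.mul_mem _ hx hy, k * l, mul_ne_zero hk hl, _, f, hf, hxy⟩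
  inv_mem' := by
    rintro x ⟨hx, k, hk, m, d, hd, hxk⟩
    exact ⟨Subgroup.inv_mem _ hx, k, hk, -m, d⁻¹, inv_mem_infinitesimals hd,
      inv_pow_eq_zpow_mul_inv (commute_of_mem_boundedCentralizer hx) hxk⟩

theorem isolator_subset_rationalPart (hg : 1 < g) : Isolator g ⊆ rationalPart hg := by
  intro x hx
  obtain ⟨k, hk, m, hm⟩ := mem_isolator_iff.1 hx
  refine ⟨⟨Subgroup.mem_centralizer_singleton_iff.2 ?_, mem_zpowersHull_of_pow_eq hg hk hm⟩,
    k, hk, m, 1, one_mem_infinitesimals hg, by rw [hm, mul_one]⟩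
  exact commute_of_mem_isolator hx (.refl g)

theorem exists_isRelativeCone_rationalPart (hg : 1 < g) :
    ∃ Q, IsRelativeCone (boundedCentralizer g : Set G) (rationalPart hg) Q := by
  refine exists_isRelativeCone_of_commutator_mem (fun x hx => hx.1) (fun u hu v hv => ?_) ?_
  · refine ⟨?_, 1, one_ne_zero, 0, _, commutator_mem_infinitesimals hg hu hv, by simp⟩
    rw [commutatorElement_def]
    exact Subgroup.mul_mem _ (Subgroup.mul_mem _ (Subgroup.mul_mem _ hu hv) (Subgroup.inv_mem _ hu))
      (Subgroup.inv_mem _ hv)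
  · rintro x hx n hn ⟨-, k, hk, m, d, hd, h⟩
    exact ⟨hx, n * k, mul_ne_zero hn hk, m, d, hd, by rw [pow_mul, h]⟩

/-- The sign of `d` does not depend on the chosen `k` and `m`. -/
def rationalPositivePart (hg : 1 < g) : Set G :=
  {x | x ∈ rationalPart hg ∧
    ∃ k : ℕ, k ≠ 0 ∧ ∃ m : ℤ, ∃ d ∈ infinitesimals g, 1 < d ∧ x ^ k = g ^ m * d}

theorem notMem_isolator_of_mem_rationalPositivePart (hg : 1 < g)
    (hx : x ∈ rationalPositivePart hg) : x ∉ Isolator g := by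
  intro hxI
  obtain ⟨hxT, k, hk, m, d, hd, hd1, hxk⟩ := hx
  obtain ⟨l, hl, r, hxl⟩ := mem_isolator_iff.1 hxI
  have hxkl := pow_mul_eq_zpow_mul_pow
    ((commute_of_mem_boundedCentralizer hxT.1).of_pow_eq_zpow_mul hxk) hxk l
  have hdl : d ^ l = g ^ (-(m * l) + r * k) := by
    rw [zpow_add, zpow_neg, eq_inv_mul_iff_mul_eq, ← hxkl, mul_comm k, pow_mul, hxl,
      ← zpow_natCast, ← zpow_mul]
  have h0 := eq_zero_of_zpow_mem_infinitesimals hg (hdl ▸ pow_mem_infinitesimals hd l)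
  rw [h0, zpow_zero] at hdl
  exact (one_lt_pow' hd1 hl).ne' hdl

theorem mul_mem_rationalPositivePart (hg : 1 < g) (hx : x ∈ rationalPositivePart hg)
    (hy : y ∈ rationalPositivePart hg ∨ y ∈ Isolator g) : x * y ∈ rationalPositivePart hg := by
  obtain ⟨hyT, l, hl, n, e, he, he1, hyl⟩ : y ∈ rationalPart hg ∧
      ∃ l : ℕ, l ≠ 0 ∧ ∃ n : ℤ, ∃ e ∈ infinitesimals g, 1 ≤ e ∧ y ^ l = g ^ n * e := by
    rcases hy with ⟨hyT, l, hl, n, e, he, he1, hyl⟩ | hyI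
    · exact ⟨hyT, l, hl, n, e, he, he1.le, hyl⟩
    · obtain ⟨l, hl, n, hyl⟩ := mem_isolator_iff.1 hyI
      exact ⟨isolator_subset_rationalPart hg hyI, l, hl, n, 1, one_mem_infinitesimals hg, le_rfl,
        by rw [hyl, mul_one]⟩
  obtain ⟨hxT, k, hk, m, d, hd, hd1, hxk⟩ := hx
  obtain ⟨f, hf, hxy, hf1⟩ := exists_mul_pow_mul_eq_zpow_mul hg
    (commute_of_mem_boundedCentralizer hxT.1) (commute_of_mem_boundedCentralizer hyT.1) hl hd he
    hxk hyl
  exact ⟨Subgroup.mul_mem _ hxT hyT, k * l, mul_ne_zero hk hl, _, f, hf, hf1 hd1 he1, hxy⟩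

theorem isRelativeCone_rationalPositivePart (hg : 1 < g) :
    IsRelativeCone (rationalPart hg : Set G) (Isolator g) (rationalPositivePart hg) := by
  refine ⟨fun x hx => hx.1, fun x => notMem_isolator_of_mem_rationalPositivePart hg,
    fun x hx y hy => mul_mem_rationalPositivePart hg hx (.inl hy), fun h hh x hx => ?_,
    fun x hx h hh => mul_mem_rationalPositivePart hg hx (.inr hh), fun x hxT hxI => ?_⟩
  · rw [(commute_of_mem_isolator hh (commute_of_mem_boundedCentralizer hx.1.1)).eq]
    exact mul_mem_rationalPositivePart hg hx (.inr hh)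
  · obtain ⟨hxB, k, hk, m, d, hd, hxk⟩ := id hxT
    rcases lt_trichotomy 1 d with hd1 | rfl | hd1
    · exact .inl ⟨hxT, k, hk, m, d, hd, hd1, hxk⟩
    · exact absurd (mem_isolator_iff.2 ⟨k, hk, m, by rw [hxk, mul_one]⟩) hxI
    · exact .inr ⟨Subgroup.inv_mem _ hxT, k, hk, -m, d⁻¹, inv_mem_infinitesimals hd,
        one_lt_inv'.2 hd1, inv_pow_eq_zpow_mul_inv (commute_of_mem_boundedCentralizer hxB) hxk⟩

theorem exists_isRelativeCone_isolator (hg : 1 < g) :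
    ∃ Q, IsRelativeCone univ (Isolator g) Q := by
  obtain ⟨Q, hQ⟩ := exists_isRelativeCone_rationalPart hg
  have hB : IsRelativeCone (Subgroup.centralizer {g} : Set G) (boundedCentralizer g) _ :=
    isRelativeCone_of_convex inf_le_left fun a ha b hb x hx hax hxb =>
      ⟨hx, mem_zpowersHull_of_le_of_le ha.2 hb.2 hax hxb⟩
  exact ⟨_, (((isRelativeCone_centralizer g).union hB (fun x hx => hx.1) (subset_univ _)).union
    hQ (fun x hx => hx.1) (subset_univ _)).union (isRelativeCone_rationalPositivePart hg)
    (isolator_subset_rationalPart hg) (subset_univ _)⟩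

theorem exists_isPositiveCone_isConvex_isolator (hg : 1 < g) :
    ∃ P, IsPositiveCone P ∧ IsConvex P (Isolator g) := by
  obtain ⟨Q, hQ⟩ := exists_isRelativeCone_isolator hg
  have hI := isRelativeCone_of_convex (K := isolatorSubgroup g) (H := ⊥) bot_le
    fun a ha b hb x _ hax hxb => by
      rw [Subgroup.mem_bot] at ha hb ⊢
      exact le_antisymm (hb ▸ hxb) (ha ▸ hax)
  rw [Subgroup.coe_bot] at hI
  exact ⟨_, (hQ.union hI (singleton_subset_iff.2 (isolatorSubgroup g).one_mem)
    (subset_univ _)).isPositiveCone, hQ.isConvex (H := isolatorSubgroup g) fun x hx => hx.1⟩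

end BiOrdered

theorem IsBiOrderable.exists_linearOrder {G : Type*} [Group G] (h : IsBiOrderable G) :
    ∃ _ : LinearOrder G, MulLeftMono G ∧ MulRightMono G := by
  obtain ⟨P, ⟨hmul, htot, -, hone⟩, hconj⟩ := h
  let r : G → G → Prop := fun a b => a⁻¹ * b ∈ P
  have : IsStrictTotalOrder G r :=
    { irrefl a := by simpa [r] using hone
      trans a b c hab hbc := by simpa [r, mul_assoc] using hmul _ hab _ hbc
      trichotomous a b hab hba := by
        rcases htot (a⁻¹ * b) with h | h | h
        · exact absurd h hab
        · exact absurd (by simpa [r] using h) hba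
        · exact inv_mul_eq_one.1 h }
  classical
  let _ := linearOrderOfSTO r
  refine ⟨inferInstance, ⟨fun c a b hab => ?_⟩, ⟨fun c a b hab => ?_⟩⟩
  · rcases hab with rfl | hab
    · exact le_rfl
    · exact Or.inr (by simpa [r, mul_assoc] using hab)
  · rcases hab with rfl | hab
    · exact le_rfl
    · exact Or.inr (by simpa [r, mul_assoc] using hconj c⁻¹ _ hab)

/-- In a bi-orderable group, the isolator `I(g)` of a nonidentity element `g`
is a relatively convex subgroup. -/
theorem isolator_relatively_convex {G : Type*} [Group G]
    (hbo : IsBiOrderable G) (g : G) (hg : g ≠ 1) :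
    ∃ P : Set G, IsPositiveCone P ∧
      (∃ H : Subgroup G, (H : Set G) = Isolator g) ∧ IsConvex P (Isolator g) := by
  obtain ⟨_, _, _⟩ := hbo.exists_linearOrder
  obtain ⟨P, hP, hconv⟩ : ∃ P, IsPositiveCone P ∧ IsConvex P (Isolator g) := by
    rcases hg.lt_or_gt with hlt | hgt
    · simpa [isolator_inv] using exists_isPositiveCone_isConvex_isolator (one_lt_inv'.2 hlt)
    · exact exists_isPositiveCone_isConvex_isolator hgt
  exact ⟨P, hP, ⟨isolatorSubgroup g, rfl⟩, hconv⟩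
end

section
/- Suppose G is a bi-orderable group with finite index subgroups H₁ and H₂, and φ : H₁ → H₂ is a group isomorphism such that for every g ∈ H₁ there exist positive integers n, m with φ(g)^n = g^m, and φ is not the identity (there exists g ∈ H₁ with φ(g) ≠ g). Then for every g ∈ H₁ there exist positive integers p, q with p ≠ q such that φ(g)^q = g^p. -/
section Helpers
variable {G : Type*} [Group G]

lemma cone_pow {P : Set G} (hP : IsPositiveCone P) {a : G} (ha : a ∈ P) :
    ∀ k : ℕ, 0 < k → a ^ k ∈ P := by
  intro k hk
  induction k with
  | zero => omega
  | succ k ih =>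
    rcases Nat.eq_zero_or_pos k with h | h
    · subst h; simpa using ha
    · rw [pow_succ]; exact hP.1 _ (ih h) _ ha

lemma bo_torsionfree (hbo : IsBiOrderable G) {g : G} {k : ℕ} (hk : 0 < k)
    (h : g ^ k = 1) : g = 1 := by
  obtain ⟨P, hP, hconj⟩ := hbo
  rcases hP.2.1 g with hg | hg | hg
  · exact absurd (h ▸ cone_pow hP hg k hk) hP.2.2.2
  · have h2 : (g⁻¹) ^ k ∈ P := cone_pow hP hg k hk
    rw [inv_pow, h, inv_one] at h2
    exact absurd h2 hP.2.2.2
  · exact hg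

lemma bo_torsionfree_z (hbo : IsBiOrderable G) {g : G} {z : ℤ} (hz : z ≠ 0)
    (h : g ^ z = 1) : g = 1 := by
  have h2 : g ^ (z.natAbs) = 1 := by
    rcases Int.natAbs_eq z with h' | h'
    · rw [← zpow_natCast, ← h']; exact h
    · rw [← zpow_natCast]
      have : g ^ ((z.natAbs : ℤ)) = (g ^ z)⁻¹ := by
        rw [h']; simp
      rw [this, h, inv_one]
  exact bo_torsionfree hbo (Int.natAbs_pos.mpr hz) h2

lemma cone_diff_pow {P : Set G} (hP : IsPositiveCone P)
    (hconj : ∀ g : G, ∀ p ∈ P, g * p * g⁻¹ ∈ P) {x y : G} (h : x⁻¹ * y ∈ P) :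
    ∀ k : ℕ, 0 < k → (x ^ k)⁻¹ * y ^ k ∈ P := by
  intro k hk
  induction k with
  | zero => omega
  | succ k ih =>
    rcases Nat.eq_zero_or_pos k with h0 | h0
    · subst h0; simpa using h
    · have hc : x⁻¹ * ((x ^ k)⁻¹ * y ^ k) * (x⁻¹)⁻¹ ∈ P := hconj x⁻¹ _ (ih h0)
      have hp := hP.1 _ hc _ h
      have heq : (x⁻¹ * ((x ^ k)⁻¹ * y ^ k) * (x⁻¹)⁻¹) * (x⁻¹ * y)
          = (x ^ (k+1))⁻¹ * y ^ (k+1) := by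
        rw [pow_succ, pow_succ, mul_inv_rev]; group
      rwa [heq] at hp

lemma bo_unique_roots (hbo : IsBiOrderable G) {x y : G} {k : ℕ} (hk : 0 < k)
    (h : x ^ k = y ^ k) : x = y := by
  obtain ⟨P, hP, hconj⟩ := hbo
  rcases hP.2.1 (x⁻¹ * y) with hm | hm | hm
  · have h2 := cone_diff_pow hP hconj hm k hk
    rw [h] at h2
    simp at h2
    exact absurd h2 hP.2.2.2
  · have hm' : y⁻¹ * x ∈ P := by rwa [mul_inv_rev, inv_inv] at hm
    have h2 := cone_diff_pow hP hconj hm' k hk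
    rw [← h] at h2
    simp at h2
    exact absurd h2 hP.2.2.2
  · rw [← mul_left_cancel_iff (a := x⁻¹), inv_mul_cancel]
    exact hm.symm

lemma bo_isol (hbo : IsBiOrderable G) {x g : G} {k : ℕ} (hk : 0 < k)
    (h : Commute x (g ^ k)) : Commute x g := by
  have h1 : (x * g * x⁻¹) ^ k = g ^ k := by
    rw [conj_pow]
    rw [show x * g ^ k = g ^ k * x from h.eq]
    group
  have h2 : x * g * x⁻¹ = g := bo_unique_roots hbo hk h1
  have : x * g = g * x := by
    calc x * g = (x * g * x⁻¹) * x := by group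
    _ = g * x := by rw [h2]
  exact this

lemma bo_isol_z (hbo : IsBiOrderable G) {x g : G} {z : ℤ} (hz : z ≠ 0)
    (h : Commute x (g ^ z)) : Commute x g := by
  have h2 : Commute x (g ^ (z.natAbs)) := by
    rw [← zpow_natCast]
    rcases Int.natAbs_eq z with h' | h'
    · rwa [← h']
    · have : g ^ ((z.natAbs : ℤ)) = (g ^ z)⁻¹ := by rw [h']; simp
      rw [this]; exact h.inv_right
  exact bo_isol hbo (Int.natAbs_pos.mpr hz) h2

lemma conj_iter {e gg : G} {a b : ℕ} (h : e * gg ^ a * e⁻¹ = gg ^ b) :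
    ∀ j : ℕ, e ^ j * gg ^ (a ^ j) * (e ^ j)⁻¹ = gg ^ (b ^ j) := by
  intro j
  induction j with
  | zero => simp
  | succ j ih =>
    have h1 : e ^ j * (gg ^ (a ^ j)) ^ a * (e ^ j)⁻¹ = (gg ^ (b ^ j)) ^ a := by
      rw [← conj_pow, ih]
    have h2 : e * (gg ^ a) ^ (b ^ j) * e⁻¹ = (gg ^ b) ^ (b ^ j) := by
      rw [← conj_pow, h]
    calc e ^ (j+1) * gg ^ (a ^ (j+1)) * (e ^ (j+1))⁻¹
        = e * (e ^ j * (gg ^ (a ^ j)) ^ a * (e ^ j)⁻¹) * e⁻¹ := by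
          rw [pow_succ' e, pow_succ a, pow_mul, mul_inv_rev]; group
      _ = e * (gg ^ (b ^ j)) ^ a * e⁻¹ := by rw [h1]
      _ = e * (gg ^ a) ^ (b ^ j) * e⁻¹ := by rw [← pow_mul, ← pow_mul, Nat.mul_comm]
      _ = (gg ^ b) ^ (b ^ j) := h2
      _ = gg ^ (b ^ (j+1)) := by rw [← pow_mul, pow_succ b, Nat.mul_comm]

end Helpers

lemma fixed_contra {G : Type*} [Group G]
    (hbo : IsBiOrderable G) {H₁ H₂ : Subgroup G} (φ : H₁ ≃* H₂)
    (hstar : ∀ g : H₁, ∃ n m : ℕ, 0 < n ∧ 0 < m ∧ (φ g : G) ^ n = (g : G) ^ m)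
    (g g₁ : H₁) (hfix : (φ g : G) = (g : G)) (hgne : (g : G) ≠ 1)
    (hmove : (φ g₁ : G) ≠ (g₁ : G)) : False := by
  obtain ⟨n, m, hn, hm, hnm⟩ := hstar g₁
  set x : G := (g₁ : G) with hx
  set y : G := ((φ g₁ : H₂) : G) with hy
  set gg : G := (g : G) with hggdef
  -- hnm : y ^ n = x ^ m
  have hxy : Commute x y := by
    have h0 : Commute x (y ^ n) := by rw [hnm]; exact (Commute.refl x).pow_right m
    exact bo_isol hbo hn h0
  set e : G := x⁻¹ * y with he
  have he1 : e ≠ 1 := by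
    intro h
    exact hmove (inv_mul_eq_one.mp h).symm
  have hxe : Commute x e := ((Commute.refl x).inv_right).mul_right hxy
  have hey : y = x * e := by rw [he]; group
  have hmn : m ≠ n := by
    intro h
    subst h
    exact hmove (bo_unique_roots hbo hn hnm)
  set s : ℤ := (m : ℤ) - (n : ℤ) with hsdef
  have hs : s ≠ 0 := sub_ne_zero.mpr (by exact_mod_cast hmn)
  have hes : e ^ (n : ℤ) = x ^ s := by
    have h1 : x ^ (n : ℕ) * e ^ (n : ℕ) = x ^ (m : ℕ) := by
      rw [← hxe.mul_pow n, ← hey, hnm]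
    have h2 : e ^ (n : ℕ) = (x ^ (n : ℕ))⁻¹ * x ^ (m : ℕ) := by rw [← h1]; group
    rw [zpow_natCast, h2, hsdef, ← zpow_natCast x n, ← zpow_natCast x m,
      ← zpow_neg, ← zpow_add]
    ring_nf
  obtain ⟨n', m', hn', hm', hw⟩ := hstar (g₁ * g * g₁⁻¹)
  have hwcoe : ((φ (g₁ * g * g₁⁻¹) : H₂) : G) = y * gg * y⁻¹ := by
    rw [map_mul, map_mul, map_inv]
    push_cast [hfix]
    rfl
  have hwco2 : ((g₁ * g * g₁⁻¹ : H₁) : G) = x * gg * x⁻¹ := by push_cast; rfl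
  have hkey : e * gg ^ n' * e⁻¹ = gg ^ m' := by
    have h3 : (y * gg * y⁻¹) ^ n' = (x * gg * x⁻¹) ^ m' := by
      rw [← hwcoe, ← hwco2]; exact hw
    rw [conj_pow, conj_pow] at h3
    have h4 : x⁻¹ * (y * gg ^ n' * y⁻¹) * x = gg ^ m' := by rw [h3]; group
    rw [← h4, he]; group
  by_cases hcomm : Commute e gg
  · -- Case A
    have hgx : Commute gg x := by
      apply bo_isol_z hbo hs
      rw [← hes]
      exact (hcomm.symm).zpow_right n
    have hxg : Commute x gg := hgx.symm
    obtain ⟨N, M, hN, hM, hu⟩ := hstar (g₁ * g)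
    have hucoe : ((φ (g₁ * g) : H₂) : G) = x * gg * e := by
      rw [map_mul]
      push_cast [hfix]
      rw [show ((φ g₁ : H₂) : G) = y from rfl, hey, mul_assoc, hcomm.eq, ← mul_assoc]
    have huc2 : ((g₁ * g : H₁) : G) = x * gg := by push_cast; rfl
    have hu' : (x * gg) ^ N * e ^ N = (x * gg) ^ M := by
      have h4 : (x * gg * e) ^ N = (x * gg) ^ M := by rw [← hucoe, ← huc2]; exact hu
      rw [← h4]
      exact ((hxe.mul_left (hcomm.symm)).mul_pow N).symm
    set t : ℤ := (M : ℤ) - N with htdef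
    by_cases ht : t = 0
    · have hMN : M = N := by
        have := sub_eq_zero.mp ht
        exact_mod_cast this
      have heN1 : e ^ (N : ℕ) = 1 := by
        rw [hMN] at hu'
        exact mul_left_cancel (by rw [hu', mul_one])
      exact he1 (bo_torsionfree hbo hN heN1)
    · have heN : e ^ (N : ℤ) = (x * gg) ^ t := by
        have h5 : e ^ (N : ℕ) = ((x * gg) ^ (N : ℕ))⁻¹ * (x * gg) ^ (M : ℕ) := by
          rw [← hu']; group
        rw [zpow_natCast, h5, htdef, ← zpow_natCast (x * gg) N,
          ← zpow_natCast (x * gg) M, ← zpow_neg, ← zpow_add]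
        ring_nf
      have E1 : e ^ ((N : ℤ) * n) = (x * gg) ^ (t * n) := by
        rw [zpow_mul, heN, ← zpow_mul]
      have E2 : e ^ ((N : ℤ) * n) = x ^ (s * N) := by
        rw [mul_comm, zpow_mul, hes, ← zpow_mul, mul_comm]
      set A : ℤ := t * n with hA
      have hAne : A ≠ 0 := mul_ne_zero ht (by exact_mod_cast hn.ne')
      set B : ℤ := s * N - A with hB
      have hggA : gg ^ A = x ^ B := by
        have h6 : x ^ A * gg ^ A = x ^ (s * N) := by
          rw [← hxg.mul_zpow A, ← E1, E2]
        calc gg ^ A = (x ^ A)⁻¹ * (x ^ A * gg ^ A) := by group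
          _ = (x ^ A)⁻¹ * x ^ (s * N) := by rw [h6]
          _ = x ^ B := by rw [hB, ← zpow_neg, ← zpow_add]; ring_nf
      have hsub : g ^ A = g₁ ^ B := by
        apply Subtype.ext
        push_cast
        exact hggA
      have happ := congrArg (fun h => ((φ h : H₂) : G)) hsub
      simp only [map_zpow] at happ
      push_cast at happ
      rw [hfix] at happ
      -- happ : gg ^ A = y ^ B
      have hyB : y ^ B = x ^ B * e ^ B := by rw [hey]; exact hxe.mul_zpow B
      have heB : e ^ B = 1 := by
        have h7 : x ^ B * 1 = x ^ B * e ^ B := by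
          rw [mul_one]
          calc x ^ B = gg ^ A := hggA.symm
            _ = y ^ B := happ
            _ = x ^ B * e ^ B := hyB
        exact (mul_left_cancel h7).symm
      have hB0 : B = 0 := by
        by_contra h
        exact he1 (bo_torsionfree_z hbo h heB)
      have hgA : gg ^ A = 1 := by rw [hggA, hB0, zpow_zero]
      exact hgne (bo_torsionfree_z hbo hAne hgA)
  · -- Case B
    have hne' : n' ≠ m' := by
      intro h
      apply hcomm
      apply bo_isol hbo hn'
      have h8 : e * gg ^ n' * e⁻¹ = gg ^ n' := by rw [hkey, h]
      calc e * gg ^ n' = (e * gg ^ n' * e⁻¹) * e := by group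
        _ = gg ^ n' * e := by rw [h8]
    set a := n' ^ n with ha
    set b := m' ^ n with hb
    have hiter := conj_iter hkey n
    have hxs : x ^ s * gg ^ a * (x ^ s)⁻¹ = gg ^ b := by
      rw [← hes, zpow_natCast]
      exact hiter
    have hsub : g₁ ^ s * g ^ a * (g₁ ^ s)⁻¹ = g ^ b := by
      apply Subtype.ext
      push_cast
      exact hxs
    have happ := congrArg (fun h => ((φ h : H₂) : G)) hsub
    simp only [map_mul, map_inv, map_zpow, map_pow] at happ
    push_cast at happ
    rw [hfix] at happ
    -- happ : y^s * gg^a * (y^s)⁻¹ = gg^b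
    have hys : y ^ s = x ^ s * e ^ s := by rw [hey]; exact hxe.mul_zpow s
    have h5 : x ^ s * (e ^ s * gg ^ a * (e ^ s)⁻¹) * (x ^ s)⁻¹ = gg ^ b := by
      rw [hys, mul_inv_rev] at happ
      rw [← happ]; group
    have h6 : x ^ s * (e ^ s * gg ^ a * (e ^ s)⁻¹) * (x ^ s)⁻¹
        = x ^ s * gg ^ a * (x ^ s)⁻¹ := by rw [h5, hxs]
    have h7 : e ^ s * gg ^ a * (e ^ s)⁻¹ = gg ^ a :=
      mul_left_cancel (mul_right_cancel h6)
    have hcomm2 : Commute (e ^ s) (gg ^ a) := by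
      calc e ^ s * gg ^ a = (e ^ s * gg ^ a * (e ^ s)⁻¹) * e ^ s := by group
        _ = gg ^ a * e ^ s := by rw [h7]
    have hcomm3 : Commute (e ^ s) gg := bo_isol hbo (pow_pos hn' n) hcomm2
    exact hcomm (bo_isol_z hbo hs hcomm3.symm).symm

/-- If `G` is bi-orderable with finite index subgroups `H₁, H₂` and `φ : H₁ → H₂` is a
non-identity isomorphism such that every `g ∈ H₁` satisfies `φ(g)^n = g^m` for some
positive `n, m`, then for every `g ∈ H₁` there exist positive `p ≠ q` with
`φ(g)^q = g^p`. -/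
theorem exponents_distinct {G : Type*} [Group G]
    (hbo : IsBiOrderable G) (H₁ H₂ : Subgroup G)
    (hfi₁ : H₁.FiniteIndex) (hfi₂ : H₂.FiniteIndex)
    (φ : H₁ ≃* H₂)
    (hstar : ∀ g : H₁, ∃ n m : ℕ, 0 < n ∧ 0 < m ∧ (φ g : G) ^ n = (g : G) ^ m)
    (hne : ∃ g : H₁, (φ g : G) ≠ (g : G)) :
    ∀ g : H₁, ∃ p q : ℕ, 0 < p ∧ 0 < q ∧ p ≠ q ∧ (φ g : G) ^ q = (g : G) ^ p := by
  intro g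
  obtain ⟨n, m, hn, hm, hnm⟩ := hstar g
  by_cases hfix : (φ g : G) = (g : G)
  · by_cases hg1 : (g : G) = 1
    · exact ⟨1, 2, one_pos, two_pos, by norm_num, by rw [hfix, hg1]; simp⟩
    · obtain ⟨g₁, hmove⟩ := hne
      exact absurd (fixed_contra hbo φ hstar g g₁ hfix hg1 hmove) (fun h => h)
  · refine ⟨m, n, hm, hn, ?_, hnm⟩
    intro h
    apply hfix
    subst h
    exact bo_unique_roots hbo hn hnm
end

section
/- Suppose G is a bi-orderable group with finite index subgroups H₁ and H₂, and φ : H₁ → H₂ is a group isomorphism such that for every g ∈ H₁ there exist positive integers n, m with φ(g)^n = g^m. Let g, h ∈ H₁ and suppose φ(g)^m = g^n and φ(h)^ℓ = h^k for positive integers m, n, k, ℓ. Then g^{n-m} h g^{m-n} ∈ I(h) and h^{k-ℓ} g h^{ℓ-k} ∈ I(g). -/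
lemma aux_funny {G : Type*} [Group G] (H₁ H₂ : Subgroup G) (φ : H₁ ≃* H₂)
    (hstar : ∀ x : H₁, ∃ n m : ℕ, 0 < n ∧ 0 < m ∧ (φ x : G) ^ n = (x : G) ^ m)
    (g h : H₁) (m n k l : ℤ) (hm : 0 < m) (hl : 0 < l)
    (hg : (φ g : G) ^ m = (g : G) ^ n) (hh : (φ h : G) ^ l = (h : G) ^ k) :
    (g : G) ^ (n - m) * (h : G) * (g : G) ^ (m - n) ∈ Isolator (h : G) := by
  obtain ⟨N, M, hN, hM, hNM⟩ := hstar (g ^ (-m) * h * g ^ m)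
  -- coerce hNM to G
  have h1 : ((φ g : G) ^ (-m) * (φ h : G) * (φ g : G) ^ m) ^ (N : ℤ)
      = ((g : G) ^ (-m) * (h : G) * (g : G) ^ m) ^ (M : ℤ) := by
    have := hNM
    push_cast [map_mul, map_zpow] at this
    rw [← zpow_natCast, ← zpow_natCast] at this
    exact_mod_cast this
  have h2 : (φ g : G) ^ (-m) * (φ h : G) ^ (N : ℤ) * (φ g : G) ^ m
      = (g : G) ^ (-m) * (h : G) ^ (M : ℤ) * (g : G) ^ m := by
    have e1 : ((φ g : G) ^ (-m))⁻¹ = (φ g : G) ^ m := by rw [zpow_neg, inv_inv]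
    have e2 : ((g : G) ^ (-m))⁻¹ = (g : G) ^ m := by rw [zpow_neg, inv_inv]
    rw [← e1, ← e2, conj_zpow, conj_zpow] at h1
    rw [← e1, ← e2]; exact h1
  have h3 : (φ h : G) ^ (N : ℤ) = (g : G) ^ (n - m) * (h : G) ^ (M : ℤ) * (g : G) ^ (m - n) := by
    have : (φ h : G) ^ (N : ℤ)
        = (φ g : G) ^ m * ((φ g : G) ^ (-m) * (φ h : G) ^ (N : ℤ) * (φ g : G) ^ m) * (φ g : G) ^ (-m) := by
      group
    have hg' : (φ g : G) ^ (-m) = (g : G) ^ (-n) := by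
      rw [zpow_neg, zpow_neg, hg]
    rw [this, h2, hg, hg']; group
  refine ⟨(M : ℤ) * l, by positivity, ⟨k * N, ?_⟩⟩
  have key : ((g : G) ^ (n - m) * (h : G) * (g : G) ^ (m - n)) ^ ((M : ℤ) * l)
      = (h : G) ^ (k * (N : ℤ)) := by
    have c1 : ((g : G) ^ (n - m) * (h : G) * (g : G) ^ (m - n)) ^ ((M : ℤ) * l)
        = (g : G) ^ (n - m) * (h : G) ^ ((M : ℤ) * l) * (g : G) ^ (m - n) := by
      have e2 : ((g : G) ^ (n - m))⁻¹ = (g : G) ^ (m - n) := by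
        rw [← zpow_neg]; ring_nf
      rw [← e2, conj_zpow]
    have c2 : (g : G) ^ (n - m) * (h : G) ^ ((M : ℤ) * l) * (g : G) ^ (m - n)
        = ((g : G) ^ (n - m) * (h : G) ^ (M : ℤ) * (g : G) ^ (m - n)) ^ l := by
      have e2 : ((g : G) ^ (n - m))⁻¹ = (g : G) ^ (m - n) := by
        rw [← zpow_neg]; ring_nf
      rw [← e2, conj_zpow, zpow_mul]
    rw [c1, c2, ← h3, ← zpow_mul, mul_comm (N : ℤ) l, zpow_mul, hh, ← zpow_mul]
  rw [key, mul_comm]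

/-- Suppose `G` is bi-orderable with finite index subgroups `H₁, H₂`, `φ : H₁ → H₂`
an isomorphism such that every element of `H₁` satisfies `φ(x)^n = x^m` for some
positive `n, m`.  If `g, h ∈ H₁` with `φ(g)^m = g^n` and `φ(h)^ℓ = h^k`, then
`g^{n-m} h g^{m-n} ∈ I(h)` and `h^{k-ℓ} g h^{ℓ-k} ∈ I(g)`. -/
theorem funny_element {G : Type*} [Group G]
    (hbo : IsBiOrderable G) (H₁ H₂ : Subgroup G)
    (hfi₁ : H₁.FiniteIndex) (hfi₂ : H₂.FiniteIndex)
    (φ : H₁ ≃* H₂)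
    (hstar : ∀ x : H₁, ∃ n m : ℕ, 0 < n ∧ 0 < m ∧ (φ x : G) ^ n = (x : G) ^ m)
    (g h : H₁) (m n k l : ℤ)
    (hm : 0 < m) (hn : 0 < n) (hk : 0 < k) (hl : 0 < l)
    (hg : (φ g : G) ^ m = (g : G) ^ n) (hh : (φ h : G) ^ l = (h : G) ^ k) :
    (g : G) ^ (n - m) * (h : G) * (g : G) ^ (m - n) ∈ Isolator (h : G) ∧
    (h : G) ^ (k - l) * (g : G) * (h : G) ^ (l - k) ∈ Isolator (g : G) := by
  exact ⟨aux_funny H₁ H₂ φ hstar g h m n k l hm hl hg hh,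
    aux_funny H₁ H₂ φ hstar h g l k n m hl hm hh hg⟩
end

section
/- Suppose G is a bi-orderable group with finite index subgroups H₁ and H₂, and φ : H₁ → H₂ is a group isomorphism such that for every g ∈ H₁ there exist positive integers n, m with φ(g)^n = g^m, and φ is not the identity (there exists g ∈ H₁ with φ(g) ≠ g). Then H₁ is abelian. -/
section Helpers

variable {G : Type*} [Group G]

private lemma cone_chain {P : Set G} (hmul : ∀ a ∈ P, ∀ b ∈ P, a * b ∈ P)
    (hconj : ∀ g : G, ∀ p ∈ P, g * p * g⁻¹ ∈ P) :
    ∀ x y : G, x * y⁻¹ ∈ P → ∀ n : ℕ, 0 < n → x ^ n * (y ^ n)⁻¹ ∈ P := by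
  intro x y hxy n hn
  induction n with
  | zero => omega
  | succ n ih =>
    rcases Nat.eq_zero_or_pos n with h0 | hpos
    · subst h0; simpa using hxy
    · have h1 : x ^ (n+1) * (y ^ (n+1))⁻¹
          = (x ^ n * (y ^ n)⁻¹) * (y ^ n * (x * y⁻¹) * (y ^ n)⁻¹) := by
        group
      rw [h1]
      exact hmul _ (ih hpos) _ (hconj _ _ hxy)

/-- bi-orderable groups have unique roots -/
private lemma uroot_of_bo (hbo : IsBiOrderable G) :
    ∀ n : ℕ, 0 < n → ∀ x y : G, x ^ n = y ^ n → x = y := by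
  obtain ⟨P, ⟨hmul, htri, hasym, hone⟩, hconj⟩ := hbo
  intro n hn x y hxy
  rcases htri (x * y⁻¹) with h | h | h
  · exfalso
    have h2 := cone_chain hmul hconj x y h n hn
    rw [hxy] at h2
    simp at h2
    exact hone h2
  · exfalso
    have h' : y * x⁻¹ ∈ P := by
      have : (x * y⁻¹)⁻¹ = y * x⁻¹ := by group
      rwa [this] at h
    have h2 := cone_chain hmul hconj y x h' n hn
    rw [← hxy] at h2
    simp at h2
    exact hone h2
  · exact mul_inv_eq_one.mp h

variable (hu : ∀ n : ℕ, 0 < n → ∀ x y : G, x ^ n = y ^ n → x = y)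

include hu

private lemma tf_nat {x : G} {n : ℕ} (hn : 0 < n) (h : x ^ n = 1) : x = 1 :=
  hu n hn x 1 (by simpa using h)

private lemma tf_int {x : G} {k : ℤ} (hk : k ≠ 0) (h : x ^ k = 1) : x = 1 := by
  have hpos : 0 < k.natAbs := Int.natAbs_pos.mpr hk
  rcases Int.natAbs_eq k with he | he
  · rw [he, zpow_natCast] at h
    exact tf_nat hu hpos h
  · rw [he, zpow_neg, zpow_natCast, inv_eq_one] at h
    exact tf_nat hu hpos h

private lemma exp_inj_nat {b : G} (hb : b ≠ 1) {X Y : ℕ} (h : b ^ X = b ^ Y) : X = Y := by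
  have key : ∀ X Y : ℕ, X < Y → b ^ X = b ^ Y → False := by
    intro X Y hlt heq
    have h1 : b ^ X * b ^ (Y - X) = b ^ X * 1 := by
      rw [← pow_add, show X + (Y - X) = Y by omega, mul_one, heq]
    have h2 : b ^ (Y - X) = 1 := mul_left_cancel h1
    exact hb (tf_nat hu (by omega) h2)
  rcases lt_trichotomy X Y with hlt | he | hgt
  · exact absurd h (fun hh => key X Y hlt hh)
  · exact he
  · exact absurd h (fun hh => key Y X hgt hh.symm)

private lemma exp_inj_int {b : G} (hb : b ≠ 1) {X Y : ℤ} (h : b ^ X = b ^ Y) : X = Y := by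
  by_contra hne
  have h2 : b ^ (X - Y) = 1 := by
    rw [zpow_sub, h, mul_inv_cancel]
  exact hb (tf_int hu (sub_ne_zero.mpr hne) h2)

private lemma comm_of_pow {x y : G} {n : ℕ} (hn : 0 < n) (h : Commute x (y ^ n)) :
    Commute x y := by
  have h1 : x * y ^ n * x⁻¹ = y ^ n := by
    rw [h.eq, mul_inv_cancel_right]
  have h2 : (x * y * x⁻¹) ^ n = y ^ n := by
    rw [conj_pow, h1]
  have := hu n hn _ _ h2
  have : x * y = y * x := by
    have h3 : x * y * x⁻¹ = y := this
    calc x * y = (x * y * x⁻¹) * x := by group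
      _ = y * x := by rw [h3]
  exact this

private lemma comm_of_zpow {x y : G} {k : ℤ} (hk : k ≠ 0) (h : Commute x (y ^ k)) :
    Commute x y := by
  have hpos : 0 < k.natAbs := Int.natAbs_pos.mpr hk
  rcases Int.natAbs_eq k with he | he
  · rw [he, zpow_natCast] at h
    exact comm_of_pow hu hpos h
  · rw [he, zpow_neg, zpow_natCast] at h
    have h2 : Commute x (y ^ k.natAbs) := by simpa using h.inv_right
    exact comm_of_pow hu hpos h2
end Helpers

private lemma exists_pow_mem' {G : Type*} [Group G] (H : Subgroup G) (hfi : H.FiniteIndex)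
    (c : G) : ∃ k : ℕ, 0 < k ∧ c ^ k ∈ H := by
  have hfin : Finite (G ⧸ H) := by
    rcases Nat.card_ne_zero.mp hfi.index_ne_zero with ⟨_, h2⟩
    exact h2
  obtain ⟨i, j, hne, heq⟩ :=
    Finite.exists_ne_map_eq_of_infinite (fun n : ℕ => ((c ^ n : G) : G ⧸ H))
  have key : ∀ i j : ℕ, i < j → ((c ^ i : G) : G ⧸ H) = ((c ^ j : G) : G ⧸ H) →
      ∃ k : ℕ, 0 < k ∧ c ^ k ∈ H := by
    intro i j hlt heq
    refine ⟨j - i, by omega, ?_⟩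
    have hmem := (QuotientGroup.eq).mp heq
    have he : (c ^ i)⁻¹ * c ^ j = c ^ (j - i) := by
      rw [show j = i + (j - i) by omega, pow_add, inv_mul_cancel_left]
      congr 1
      omega
    rwa [he] at hmem
  rcases lt_trichotomy i j with hlt | he | hgt
  · exact key i j hlt heq
  · exact absurd he hne
  · exact key j i hgt heq.symm

private lemma nat_exp_match {p q j j' : ℕ} (hp : 0 < p) (hq : 0 < q) (hpq : p ≠ q)
    (h : q ^ j * p ^ j' = q ^ j' * p ^ j) : j = j' := by
  have key : ∀ u v : ℕ, u < v → q ^ u * p ^ v = q ^ v * p ^ u → False := by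
    intro u v huv heq
    have h1 : (q ^ u * p ^ u) * p ^ (v - u) = (q ^ u * p ^ u) * q ^ (v - u) := by
      have e1 : (q ^ u * p ^ u) * p ^ (v - u) = q ^ u * p ^ v := by
        rw [mul_assoc, ← pow_add, show u + (v - u) = v by omega]
      have e2 : (q ^ u * p ^ u) * q ^ (v - u) = q ^ v * p ^ u := by
        rw [show q ^ u * p ^ u * q ^ (v - u) = (q ^ u * q ^ (v - u)) * p ^ u by ring,
          ← pow_add, show u + (v - u) = v by omega]
      rw [e1, e2, heq]
    have h2 : p ^ (v - u) = q ^ (v - u) :=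
      Nat.eq_of_mul_eq_mul_left (by positivity) h1
    exact hpq (Nat.pow_left_injective (by omega) h2)
  rcases lt_trichotomy j j' with hlt | he | hgt
  · exact absurd h (by intro hh; exact key j j' hlt hh)
  · exact he
  · exact absurd h.symm (by intro hh; exact key j' j hgt hh)

/-- If `G` is bi-orderable with finite index subgroups `H₁, H₂` and `φ : H₁ → H₂` is a
non-identity isomorphism such that every `g ∈ H₁` satisfies `φ(g)^n = g^m` for some
positive `n, m`, then `H₁` is abelian. -/
theorem abelian_of_star {G : Type*} [Group G]
    (hbo : IsBiOrderable G) (H₁ H₂ : Subgroup G)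
    (hfi₁ : H₁.FiniteIndex) (hfi₂ : H₂.FiniteIndex)
    (φ : H₁ ≃* H₂)
    (hstar : ∀ g : H₁, ∃ n m : ℕ, 0 < n ∧ 0 < m ∧ (φ g : G) ^ n = (g : G) ^ m)
    (hne : ∃ g : H₁, (φ g : G) ≠ (g : G)) :
    ∀ a b : H₁, a * b = b * a := by
  have hu := uroot_of_bo hbo
  -- φ g commutes with g
  have hcomm : ∀ g : H₁, Commute ((φ g : G)) (g : G) := by
    intro g
    obtain ⟨n, m, hn, hm, h⟩ := hstar g
    have h1 : Commute ((φ g : G)) ((g : G) ^ m) := by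
      rw [← h]; exact (Commute.refl _).pow_right n
    exact comm_of_pow hu hm h1
  -- The key machine
  have lemM : ∀ (b : H₁) (c : G) (A B : ℕ), 0 < A → 0 < B → A ≠ B →
      (b : G) ≠ 1 → c * (b : G) ^ A * c⁻¹ = (b : G) ^ B → (φ b : G) = (b : G) := by
    intro b c A B hA hB hAB hb hrel
    -- base scaling for c
    have Sc : ∀ t : ℕ, c * (b : G) ^ (A * t) * c⁻¹ = (b : G) ^ (B * t) := by
      intro t
      rw [pow_mul, pow_mul, ← hrel, conj_pow]
    -- iteration
    have iter : ∀ (u : G) (p q : ℕ),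
        (∀ t : ℕ, u * (b : G) ^ (p * t) * u⁻¹ = (b : G) ^ (q * t)) →
        ∀ j t : ℕ, u ^ j * (b : G) ^ (p ^ j * t) * (u ^ j)⁻¹ = (b : G) ^ (q ^ j * t) := by
      intro u p q hS j
      induction j with
      | zero => intro t; simp
      | succ j ih =>
        intro t
        calc u ^ (j+1) * (b : G) ^ (p ^ (j+1) * t) * (u ^ (j+1))⁻¹
            = u ^ j * (u * (b : G) ^ (p * (p ^ j * t)) * u⁻¹) * (u ^ j)⁻¹ := by
              rw [show p ^ (j+1) * t = p * (p ^ j * t) by ring, pow_succ]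
              group
          _ = u ^ j * (b : G) ^ (p ^ j * (q * t)) * (u ^ j)⁻¹ := by
              rw [hS (p ^ j * t), show q * (p ^ j * t) = p ^ j * (q * t) by ring]
          _ = (b : G) ^ (q ^ j * (q * t)) := ih (q * t)
          _ = (b : G) ^ (q ^ (j+1) * t) := by rw [show q ^ j * (q * t) = q ^ (j+1) * t by ring]
    -- exponent matching
    have matching : ∀ (u v : G) (p q : ℕ), 0 < p → 0 < q → p ≠ q →
        (∀ t : ℕ, u * (b : G) ^ (p * t) * u⁻¹ = (b : G) ^ (q * t)) →
        (∀ t : ℕ, v * (b : G) ^ (p * t) * v⁻¹ = (b : G) ^ (q * t)) →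
        ∀ j j' : ℕ, u ^ j = v ^ j' → j = j' := by
      intro u v p q hp hq hpq hSu hSv j j' hjj
      have h1 := iter u p q hSu j (p ^ j')
      have h2 := iter v p q hSv j' (p ^ j)
      rw [hjj] at h1
      rw [show p ^ j * p ^ j' = p ^ j' * p ^ j by ring] at h1
      have h3 : (b : G) ^ (q ^ j * p ^ j') = (b : G) ^ (q ^ j' * p ^ j) := by
        rw [← h1, ← h2]
      exact nat_exp_match hp hq hpq (exp_inj_nat hu hb h3)
    -- pass to a power of c lying in H₁
    obtain ⟨k, hk, hmem⟩ := exists_pow_mem' H₁ hfi₁ c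
    set a₁ := A ^ k with ha₁def
    set b₁ := B ^ k with hb₁def
    have ha₁ : 0 < a₁ := pow_pos hA k
    have hb₁ : 0 < b₁ := pow_pos hB k
    have hab₁ : a₁ ≠ b₁ := fun h => hAB (Nat.pow_left_injective (by omega) h)
    have hSd0 : ∀ t : ℕ, c ^ k * (b : G) ^ (a₁ * t) * (c ^ k)⁻¹ = (b : G) ^ (b₁ * t) := by
      intro t
      have := iter c A B Sc k t
      simpa using this
    set d : H₁ := ⟨c ^ k, hmem⟩ with hddef
    have hdco : (d : G) = c ^ k := rfl
    have hSdd : ∀ t : ℕ, (d : G) * (b : G) ^ (a₁ * t) * (d : G)⁻¹ = (b : G) ^ (b₁ * t) := by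
      intro t; rw [hdco]; exact hSd0 t
    -- transfer to H₁ and apply φ
    have hH : ∀ t : ℕ, d * b ^ (a₁ * t) * d⁻¹ = b ^ (b₁ * t) := by
      intro t
      apply Subtype.ext
      push_cast
      exact hSdd t
    have hφH : ∀ t : ℕ,
        (φ d : G) * (φ b : G) ^ (a₁ * t) * (φ d : G)⁻¹ = (φ b : G) ^ (b₁ * t) := by
      intro t
      have h0 := congrArg (fun x : H₁ => ((φ x : H₂) : G)) (hH t)
      simpa [map_mul, map_pow, map_inv] using h0
    -- star data for b
    obtain ⟨n, m, hn, hm, hsb⟩ := hstar b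
    -- φ d conjugates powers of b like d does
    have hconv : ∀ X : ℕ, (φ b : G) ^ (n * X) = (b : G) ^ (m * X) := by
      intro X
      rw [pow_mul, pow_mul, hsb]
    have hE : (φ d : G) * (b : G) ^ (m * a₁) * (φ d : G)⁻¹ = (b : G) ^ (m * b₁) := by
      have h := hφH n
      rw [show a₁ * n = n * a₁ by ring, show b₁ * n = n * b₁ by ring,
        hconv a₁, hconv b₁] at h
      exact h
    have hcd : Commute ((d : G)⁻¹ * (φ d : G)) ((b : G)) := by
      have h2 : (d : G) * (b : G) ^ (m * a₁) * (d : G)⁻¹ = (b : G) ^ (m * b₁) := by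
        rw [show m * a₁ = a₁ * m by ring, show m * b₁ = b₁ * m by ring]
        exact hSdd m
      have h3 : ((d : G)⁻¹ * (φ d : G)) * (b : G) ^ (m * a₁) *
          ((d : G)⁻¹ * (φ d : G))⁻¹ = (b : G) ^ (m * a₁) := by
        have := hE.trans h2.symm
        -- (φ d) X (φ d)⁻¹ = d X d⁻¹  ⟹  (d⁻¹ φ d) X (d⁻¹ φ d)⁻¹ = X
        calc ((d : G)⁻¹ * (φ d : G)) * (b : G) ^ (m * a₁) * ((d : G)⁻¹ * (φ d : G))⁻¹
            = (d : G)⁻¹ * ((φ d : G) * (b : G) ^ (m * a₁) * (φ d : G)⁻¹) * (d : G) := by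
              group
          _ = (d : G)⁻¹ * ((d : G) * (b : G) ^ (m * a₁) * (d : G)⁻¹) * (d : G) := by
              rw [this]
          _ = (b : G) ^ (m * a₁) := by group
      have h4 : Commute ((d : G)⁻¹ * (φ d : G)) ((b : G) ^ (m * a₁)) := by
        have := h3
        unfold Commute SemiconjBy
        calc ((d : G)⁻¹ * (φ d : G)) * (b : G) ^ (m * a₁)
            = (((d : G)⁻¹ * (φ d : G)) * (b : G) ^ (m * a₁) *
                ((d : G)⁻¹ * (φ d : G))⁻¹) * ((d : G)⁻¹ * (φ d : G)) := by group
          _ = (b : G) ^ (m * a₁) * ((d : G)⁻¹ * (φ d : G)) := by rw [h3]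
      exact comm_of_pow hu (by positivity) h4
    have hSφd : ∀ t : ℕ,
        (φ d : G) * (b : G) ^ (a₁ * t) * (φ d : G)⁻¹ = (b : G) ^ (b₁ * t) := by
      intro t
      have hcom : ((d : G)⁻¹ * (φ d : G)) * (b : G) ^ (a₁ * t)
          = (b : G) ^ (a₁ * t) * ((d : G)⁻¹ * (φ d : G)) := (hcd.pow_right (a₁ * t)).eq
      calc (φ d : G) * (b : G) ^ (a₁ * t) * (φ d : G)⁻¹
          = (d : G) * (((d : G)⁻¹ * (φ d : G)) * (b : G) ^ (a₁ * t) *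
              ((d : G)⁻¹ * (φ d : G))⁻¹) * (d : G)⁻¹ := by group
        _ = (d : G) * ((b : G) ^ (a₁ * t) * ((d : G)⁻¹ * (φ d : G)) *
              ((d : G)⁻¹ * (φ d : G))⁻¹) * (d : G)⁻¹ := by rw [hcom]
        _ = (d : G) * (b : G) ^ (a₁ * t) * (d : G)⁻¹ := by group
        _ = (b : G) ^ (b₁ * t) := hSdd t
    -- M2 : φ d = d
    obtain ⟨nd, md, hnd, hmd, hsd⟩ := hstar d
    have hndmd : nd = md :=
      matching (φ d : G) (d : G) a₁ b₁ ha₁ hb₁ hab₁ hSφd hSdd nd md hsd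
    have hφd : (φ d : G) = (d : G) := by
      apply hu nd hnd
      rw [hsd, hndmd]
    -- M3 : conclude
    have hβb : Commute ((φ b : G)) ((b : G)) := hcomm b
    obtain ⟨N, M, hN, hM, hsdb⟩ := hstar (d * b)
    have hco1 : (φ (d * b) : G) = (d : G) * (φ b : G) := by
      rw [map_mul]
      push_cast
      rw [hφd]
    have hco2 : ((d * b : H₁) : G) = (d : G) * (b : G) := rfl
    have hSdb : ∀ t : ℕ, ((d : G) * (b : G)) * (b : G) ^ (a₁ * t) *
        ((d : G) * (b : G))⁻¹ = (b : G) ^ (b₁ * t) := by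
      intro t
      have hbb : (b : G) * (b : G) ^ (a₁ * t) * (b : G)⁻¹ = (b : G) ^ (a₁ * t) := by
        have : Commute ((b : G)) ((b : G) ^ (a₁ * t)) := (Commute.refl _).pow_right _
        rw [this.eq, mul_inv_cancel_right]
      calc ((d : G) * (b : G)) * (b : G) ^ (a₁ * t) * ((d : G) * (b : G))⁻¹
          = (d : G) * ((b : G) * (b : G) ^ (a₁ * t) * (b : G)⁻¹) * (d : G)⁻¹ := by group
        _ = (d : G) * (b : G) ^ (a₁ * t) * (d : G)⁻¹ := by rw [hbb]
        _ = (b : G) ^ (b₁ * t) := hSdd t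
    have hSdβ : ∀ t : ℕ, ((d : G) * (φ b : G)) * (b : G) ^ (a₁ * t) *
        ((d : G) * (φ b : G))⁻¹ = (b : G) ^ (b₁ * t) := by
      intro t
      have hbb : (φ b : G) * (b : G) ^ (a₁ * t) * (φ b : G)⁻¹ = (b : G) ^ (a₁ * t) := by
        have : Commute ((φ b : G)) ((b : G) ^ (a₁ * t)) := hβb.pow_right _
        rw [this.eq, mul_inv_cancel_right]
      calc ((d : G) * (φ b : G)) * (b : G) ^ (a₁ * t) * ((d : G) * (φ b : G))⁻¹
          = (d : G) * ((φ b : G) * (b : G) ^ (a₁ * t) * (φ b : G)⁻¹) * (d : G)⁻¹ := by group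
        _ = (d : G) * (b : G) ^ (a₁ * t) * (d : G)⁻¹ := by rw [hbb]
        _ = (b : G) ^ (b₁ * t) := hSdd t
    have hNM : N = M := by
      apply matching ((d : G) * (φ b : G)) ((d : G) * (b : G)) a₁ b₁ ha₁ hb₁ hab₁ hSdβ hSdb
      rw [← hco1, ← hco2]
      exact hsdb
    have hfin : (d : G) * (φ b : G) = (d : G) * (b : G) := by
      apply hu N hN
      rw [← hco1, ← hco2, hsdb, hNM]
    exact mul_left_cancel hfin
  -- Lemma A : a⁻¹ φ(a) commutes with every element of H₁
  have lemA : ∀ a b : H₁, Commute ((a : G)⁻¹ * (φ a : G)) ((b : G)) := by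
    intro a b
    by_cases hb1 : (b : G) = 1
    · rw [hb1]; exact Commute.one_right _
    obtain ⟨n, m, hn, hm, hsb⟩ := hstar b
    set b' : H₁ := a * b * a⁻¹ with hb'def
    obtain ⟨n', m', hn', hm', hsb'⟩ := hstar b'
    have hb'co : (b' : G) = (a : G) * (b : G) * (a : G)⁻¹ := by push_cast [hb'def]; group
    have hφb' : (φ b' : G) = (φ a : G) * (φ b : G) * (φ a : G)⁻¹ := by
      rw [hb'def, map_mul, map_mul, map_inv]
      push_cast
      group
    -- the key conjugation relation
    have key : ((a : G)⁻¹ * (φ a : G)) * (b : G) ^ (m * n') *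
        ((a : G)⁻¹ * (φ a : G))⁻¹ = (b : G) ^ (m' * n) := by
      have h1 : (φ b' : G) ^ (n * n') = (a : G) * (b : G) ^ (m' * n) * (a : G)⁻¹ := by
        rw [show n * n' = n' * n by ring, pow_mul, hsb', hb'co, conj_pow, conj_pow,
          ← pow_mul]
      have h2 : (φ b' : G) ^ (n * n') = (φ a : G) * (b : G) ^ (m * n') * (φ a : G)⁻¹ := by
        rw [hφb', conj_pow, pow_mul, hsb, ← pow_mul]
      have h3 := h2.symm.trans h1
      calc ((a : G)⁻¹ * (φ a : G)) * (b : G) ^ (m * n') * ((a : G)⁻¹ * (φ a : G))⁻¹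
          = (a : G)⁻¹ * ((φ a : G) * (b : G) ^ (m * n') * (φ a : G)⁻¹) * (a : G) := by
            group
        _ = (a : G)⁻¹ * ((a : G) * (b : G) ^ (m' * n) * (a : G)⁻¹) * (a : G) := by rw [h3]
        _ = (b : G) ^ (m' * n) := by group
    by_cases hAB : m * n' = m' * n
    · rw [hAB] at key
      have h4 : Commute ((a : G)⁻¹ * (φ a : G)) ((b : G) ^ (m' * n)) := by
        unfold Commute SemiconjBy
        calc ((a : G)⁻¹ * (φ a : G)) * (b : G) ^ (m' * n)
            = (((a : G)⁻¹ * (φ a : G)) * (b : G) ^ (m' * n) *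
                ((a : G)⁻¹ * (φ a : G))⁻¹) * ((a : G)⁻¹ * (φ a : G)) := by group
          _ = (b : G) ^ (m' * n) * ((a : G)⁻¹ * (φ a : G)) := by rw [key]
      exact comm_of_pow hu (by positivity) h4
    · exfalso
      -- apply the machine to both b and b'
      have hfb : (φ b : G) = (b : G) :=
        lemM b ((a : G)⁻¹ * (φ a : G)) (m * n') (m' * n) (by positivity) (by positivity)
          hAB hb1 key
      have hb'1 : (b' : G) ≠ 1 := by
        rw [hb'co]
        intro hcon
        apply hb1
        have : (b : G) = (a : G)⁻¹ * 1 * (a : G) := by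
          rw [← hcon]; group
        simpa using this
      have key' : ((a : G) * ((a : G)⁻¹ * (φ a : G)) * (a : G)⁻¹) * (b' : G) ^ (m * n') *
          ((a : G) * ((a : G)⁻¹ * (φ a : G)) * (a : G)⁻¹)⁻¹ = (b' : G) ^ (m' * n) := by
        calc ((a : G) * ((a : G)⁻¹ * (φ a : G)) * (a : G)⁻¹) * (b' : G) ^ (m * n') *
            ((a : G) * ((a : G)⁻¹ * (φ a : G)) * (a : G)⁻¹)⁻¹
            = ((a : G) * ((a : G)⁻¹ * (φ a : G)) * (a : G)⁻¹) *
              ((a : G) * (b : G) ^ (m * n') * (a : G)⁻¹) *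
              ((a : G) * ((a : G)⁻¹ * (φ a : G)) * (a : G)⁻¹)⁻¹ := by rw [hb'co, conj_pow]
          _ = (a : G) * (((a : G)⁻¹ * (φ a : G)) * (b : G) ^ (m * n') *
              ((a : G)⁻¹ * (φ a : G))⁻¹) * (a : G)⁻¹ := by group
          _ = (a : G) * (b : G) ^ (m' * n) * (a : G)⁻¹ := by rw [key]
          _ = (b' : G) ^ (m' * n) := by rw [hb'co, conj_pow]
      have hfb' : (φ b' : G) = (b' : G) :=
        lemM b' ((a : G) * ((a : G)⁻¹ * (φ a : G)) * (a : G)⁻¹) (m * n') (m' * n)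
          (by positivity) (by positivity) hAB hb'1 key'
      -- conclude m = n and m' = n'
      have hmn : m = n := by
        have : (b : G) ^ n = (b : G) ^ m := by rw [← hsb, hfb]
        exact (exp_inj_nat hu hb1 this).symm
      have hmn' : m' = n' := by
        have : (b' : G) ^ n' = (b' : G) ^ m' := by rw [← hsb', hfb']
        exact (exp_inj_nat hu hb'1 this).symm
      apply hAB
      rw [hmn, hmn']
      ring
  -- ζ-power identity : (x⁻¹ φ x)^n = x^(m - n)  (in ℤ)
  have hzeta : ∀ (x : H₁) (n m : ℕ), 0 < n → (φ x : G) ^ n = (x : G) ^ m →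
      ((x : G)⁻¹ * (φ x : G)) ^ (n : ℤ) = (x : G) ^ ((m : ℤ) - (n : ℤ)) := by
    intro x n m hn hs
    have hcx : Commute ((x : G)⁻¹ * (φ x : G)) ((x : G)) := lemA x x
    have h1 : (φ x : G) = (x : G) * ((x : G)⁻¹ * (φ x : G)) := by group
    have h2 : ((x : G) * ((x : G)⁻¹ * (φ x : G))) ^ n
        = (x : G) ^ n * ((x : G)⁻¹ * (φ x : G)) ^ n := (hcx.symm).mul_pow n
    have h3 : (x : G) ^ n * ((x : G)⁻¹ * (φ x : G)) ^ n = (x : G) ^ m := by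
      rw [← h2, ← h1, hs]
    have h4 : ((x : G)⁻¹ * (φ x : G)) ^ (n : ℤ) = ((x : G) ^ n)⁻¹ * (x : G) ^ m := by
      rw [zpow_natCast, eq_inv_mul_iff_mul_eq]
      exact h3
    rw [h4, ← zpow_natCast ((x : G)) n, ← zpow_natCast ((x : G)) m, ← zpow_neg,
      ← zpow_add]
    congr 1
    ring
  -- fixed points of φ are trivial
  obtain ⟨g₀, hg₀⟩ := hne
  have hK : ∀ b : H₁, (φ b : G) = (b : G) → (b : G) = 1 := by
    intro b hfb
    set ζ : G := (g₀ : G)⁻¹ * (φ g₀ : G) with hζdef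
    have hζ : ζ ≠ 1 := by
      intro hcon
      apply hg₀
      rw [hζdef] at hcon
      group at hcon ⊢
      rw [eq_comm, ← inv_mul_eq_one]
      group
      exact hcon
    obtain ⟨n, m, hn, hm, hs0⟩ := hstar g₀
    have hz0 : ζ ^ (n : ℤ) = (g₀ : G) ^ ((m : ℤ) - (n : ℤ)) := hzeta g₀ n m hn hs0
    have hmn : (m : ℤ) - (n : ℤ) ≠ 0 := by
      intro hcon
      apply hζ
      apply tf_int hu (k := (n : ℤ)) (by exact_mod_cast hn.ne')
      rw [hz0, hcon, zpow_zero]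
    -- g₁ = g₀ * b
    set g₁ : H₁ := g₀ * b with hg₁def
    have hg₁co : (g₁ : G) = (g₀ : G) * (b : G) := rfl
    have hcζb : Commute ζ ((b : G)) := lemA g₀ b
    have hφg₁ : (φ g₁ : G) = (g₁ : G) * ζ := by
      rw [hg₁def, map_mul]
      push_cast
      rw [hfb, hζdef]
      have := hcζb.eq
      calc (φ g₀ : G) * (b : G) = (g₀ : G) * (((g₀ : G)⁻¹ * (φ g₀ : G)) * (b : G)) := by
            group
        _ = (g₀ : G) * ((b : G) * ((g₀ : G)⁻¹ * (φ g₀ : G))) := by rw [this]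
        _ = (g₀ : G) * (b : G) * ((g₀ : G)⁻¹ * (φ g₀ : G)) := by group
    obtain ⟨N, M, hN, hM, hs1⟩ := hstar g₁
    have hz1 : ζ ^ (N : ℤ) = (g₁ : G) ^ ((M : ℤ) - (N : ℤ)) := by
      have h5 : ((g₁ : G)⁻¹ * (φ g₁ : G)) = ζ := by rw [hφg₁]; group
      have := hzeta g₁ N M hN hs1
      rwa [h5] at this
    have hMN : (M : ℤ) - (N : ℤ) ≠ 0 := by
      intro hcon
      apply hζ
      apply tf_int hu (k := (N : ℤ)) (by exact_mod_cast hN.ne')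
      rw [hz1, hcon, zpow_zero]
    -- g₁ ^ P = g₀ ^ Q
    set P : ℤ := ((M : ℤ) - N) * n with hPdef
    set Q : ℤ := ((m : ℤ) - n) * N with hQdef
    have hP : P ≠ 0 := mul_ne_zero hMN (by exact_mod_cast hn.ne')
    have hQ : Q ≠ 0 := mul_ne_zero hmn (by exact_mod_cast hN.ne')
    have hPQ : (g₁ : G) ^ P = (g₀ : G) ^ Q := by
      rw [hPdef, hQdef, zpow_mul, ← hz1, zpow_mul ((g₀ : G)),
        show ((n : ℤ)) = ((n : ℤ)) by rfl]
      rw [← hz0]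
      rw [← zpow_mul, ← zpow_mul]
      congr 1
      ring
    -- g₀ commutes with g₁, hence with b
    have hc01 : Commute ((g₀ : G)) ((g₁ : G)) := by
      apply comm_of_zpow hu hP
      rw [hPQ]
      exact (Commute.refl _).zpow_right Q
    have hc0b : Commute ((g₀ : G)) ((b : G)) := by
      have : (b : G) = (g₀ : G)⁻¹ * (g₁ : G) := by rw [hg₁co]; group
      rw [this]
      exact Commute.mul_right (Commute.inv_right (Commute.refl _)) hc01
    -- b ^ P = g₀ ^ (Q - P)
    have hbP : (b : G) ^ P = (g₀ : G) ^ (Q - P) := by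
      have h6 : (g₀ : G) ^ P * (b : G) ^ P = (g₀ : G) ^ Q := by
        rw [← hc0b.mul_zpow, ← hg₁co, hPQ]
      have h7' : (b : G) ^ P = ((g₀ : G) ^ P)⁻¹ * (g₀ : G) ^ Q := by
        rw [← h6]; group
      rw [h7', ← zpow_neg, ← zpow_add]
      congr 1
      ring
    -- transfer to H₁ and apply φ
    have hbPH : (b ^ P : H₁) = g₀ ^ (Q - P) := by
      apply Subtype.ext
      push_cast
      exact hbP
    have hφbP := congrArg (fun x : H₁ => ((φ x : H₂) : G)) hbPH
    simp only [map_zpow] at hφbP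
    have hφbP' : (b : G) ^ P = ((φ g₀ : G)) ^ (Q - P) := by
      push_cast at hφbP
      rwa [hfb] at hφbP
    have hφg₀ : (φ g₀ : G) = (g₀ : G) * ζ := by rw [hζdef]; group
    have hc0ζ : Commute ((g₀ : G)) ζ := (lemA g₀ g₀).symm
    have h7 : (b : G) ^ P = (g₀ : G) ^ (Q - P) * ζ ^ (Q - P) := by
      rw [hφbP', hφg₀, hc0ζ.mul_zpow]
    have h8 : ζ ^ (Q - P) = 1 := by
      have h := hbP.symm.trans h7
      have h' : (g₀ : G) ^ (Q - P) * 1 = (g₀ : G) ^ (Q - P) * ζ ^ (Q - P) := by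
        rw [mul_one]; exact h
      exact (mul_left_cancel h').symm
    have hQP : Q = P := by
      by_contra hcon
      exact hζ (tf_int hu (sub_ne_zero.mpr hcon) h8)
    have h9 : (b : G) ^ P = 1 := by rw [hbP, hQP, sub_self, zpow_zero]
    exact tf_int hu hP h9
  -- the final argument
  intro a b
  by_cases hb1 : (b : G) = 1
  · have hb : b = 1 := by
      apply Subtype.ext
      simpa using hb1
    rw [hb, mul_one, one_mul]
  obtain ⟨n, m, hn, hm, hsb⟩ := hstar b
  have hfb : (φ b : G) ≠ (b : G) := fun h => hb1 (hK b h)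
  have hz : ((b : G)⁻¹ * (φ b : G)) ^ (n : ℤ) = (b : G) ^ ((m : ℤ) - n) :=
    hzeta b n m hn hsb
  have hmn : (m : ℤ) - n ≠ 0 := by
    intro hcon
    apply hfb
    have hζ1 : ((b : G)⁻¹ * (φ b : G)) = 1 := by
      apply tf_int hu (k := (n : ℤ)) (by exact_mod_cast hn.ne')
      rw [hz, hcon, zpow_zero]
    rw [eq_comm, ← inv_mul_eq_one]
    group
    group at hζ1
    exact hζ1
  have hcab : Commute ((a : G)) ((b : G)) := by
    apply comm_of_zpow hu hmn
    rw [← hz]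
    exact ((lemA b a).symm).zpow_right (n : ℤ)
  apply Subtype.ext
  push_cast
  exact hcab.eq
end

section
/- Suppose that G is a left-orderable group with a generating set {g_i}_{i ∈ I}, and that for each i ∈ I there exists a positive cone P_i of G which is the positive cone of a discrete left-ordering with g_i as smallest positive element (that is, g_i ∈ P_i and for every h ∈ P_i either h = g_i or g_i⁻¹h ∈ P_i). Then Aut(G) acts faithfully on LO(G): every nontrivial automorphism φ of G satisfies φ(P) ≠ P for some positive cone P. -/
/-- Suppose `G` is left-orderable, generated by `{g i}ᵢ`, and each `g i` is the
smallest positive element of some discrete left-ordering of `G`.  Then `Aut(G)` acts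
faithfully on `LO(G)`. -/
theorem aut_faithful_of_discrete_orderings {G : Type*} [Group G] {ι : Type*}
    (hLO : ∃ P : Set G, IsPositiveCone P)
    (g : ι → G) (hgen : Subgroup.closure (Set.range g) = ⊤)
    (hdisc : ∀ i : ι, ∃ P : Set G, IsPositiveCone P ∧ g i ∈ P ∧
      ∀ h ∈ P, h = g i ∨ (g i)⁻¹ * h ∈ P) :
    ∀ φ : G ≃* G, φ ≠ MulEquiv.refl G →
      ∃ P : Set G, IsPositiveCone P ∧ ⇑φ '' P ≠ P := by
  intro φ hφ
  by_contra hcon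
  push_neg at hcon
  have key : ∀ i, φ (g i) = g i := by
    intro i
    obtain ⟨P, hP, hgP, hmin⟩ := hdisc i
    have hPP : ⇑φ '' P = P := hcon P hP
    have h1 : φ (g i) ∈ P := hPP ▸ ⟨g i, hgP, rfl⟩
    -- φ (g i) is also a smallest positive element of P
    have h2 : ∀ h ∈ P, h = φ (g i) ∨ (φ (g i))⁻¹ * h ∈ P := by
      intro h hh
      rw [← hPP] at hh
      obtain ⟨h', hh', rfl⟩ := hh
      rcases hmin h' hh' with heq | hlt
      · exact Or.inl (by rw [heq])
      · refine Or.inr ?_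
        have : φ ((g i)⁻¹ * h') ∈ ⇑φ '' P := ⟨_, hlt, rfl⟩
        rw [hPP] at this
        simpa [map_mul] using this
    rcases hmin (φ (g i)) h1 with heq | hlt
    · exact heq
    rcases h2 (g i) hgP with heq | hlt'
    · exact heq.symm
    exfalso
    exact hP.2.2.1 _ hlt (by simpa using hlt')
  apply hφ
  ext x
  have hx : x ∈ Subgroup.closure (Set.range g) := hgen ▸ Subgroup.mem_top x
  induction hx using Subgroup.closure_induction with
  | mem y hy =>
    obtain ⟨i, rfl⟩ := hy
    simpa using key i
  | one => simp
  | mul a b _ _ ha hb => simp_all [map_mul]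
  | inv a _ ha => simp_all
end

section
/- Let G be a left-orderable group, let H, H₁, H₂ be finite index subgroups of G, and let φ : H₁ → H₂ be a group isomorphism for which there exist positive integers p, q with φ(g)^q = g^p for all g ∈ H₁. Let P be a positive cone of the subgroup H. Then for every g ∈ H that also lies in the image φ(H ∩ H₁), one has g ∈ P if and only if g ∈ φ(P ∩ H₁); that is, the positive cones P and φ(P ∩ H₁) agree on their common domain. -/
lemma cone_pow_mem {G : Type*} [Group G] {P : Set G} (hP : IsPositiveCone P)
    {x : G} (hx : x ∈ P) : ∀ n, 0 < n → x ^ n ∈ P := by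
  intro n hn
  induction n with
  | zero => omega
  | succ m ih =>
    rcases Nat.eq_zero_or_pos m with h | h
    · subst h; simpa using hx
    · rw [pow_succ]; exact hP.1 _ (ih h) _ hx

lemma cone_mem_of_pow_mem {G : Type*} [Group G] {P : Set G} (hP : IsPositiveCone P)
    {x : G} {n : ℕ} (hn : 0 < n) (hx : x ^ n ∈ P) : x ∈ P := by
  rcases hP.2.1 x with h | h | h
  · exact h
  · have h2 := cone_pow_mem hP h n hn
    rw [inv_pow] at h2
    exact absurd h2 (hP.2.2.1 _ hx)
  · subst h; simp at hx; exact absurd hx hP.2.2.2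

/-- Let `G` be left-orderable with finite index subgroups `H, H₁, H₂`, and let
`φ : H₁ → H₂` be an isomorphism with `φ(g)^q = g^p` for all `g ∈ H₁`, for some fixed
positive `p, q` (i.e. `φ = τ_{p/q}`).  Then for any positive cone `P` of `H`, the
left-orderings determined by `P` and by `φ(P ∩ H₁)` agree on their common domain:
for every `g ∈ H` lying in `φ(H ∩ H₁)`, `g ∈ P` iff `g ∈ φ(P ∩ H₁)`. -/
theorem tau_preserves_cones_on_common_domain {G : Type*} [Group G]
    (hLO : ∃ P : Set G, IsPositiveCone P)
    (H H₁ H₂ : Subgroup G)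
    (hfi : H.FiniteIndex) (hfi₁ : H₁.FiniteIndex) (hfi₂ : H₂.FiniteIndex)
    (φ : H₁ ≃* H₂) (p q : ℕ) (hp : 0 < p) (hq : 0 < q)
    (hφ : ∀ g : H₁, (φ g : G) ^ q = (g : G) ^ p)
    (P : Set H) (hP : IsPositiveCone P) :
    ∀ g : G, g ∈ H → (∃ k : H₁, (k : G) ∈ H ∧ (φ k : G) = g) →
      ((∃ x : H, x ∈ P ∧ (x : G) = g) ↔
        (∃ k : H₁, (∃ x : H, x ∈ P ∧ (x : G) = (k : G)) ∧ (φ k : G) = g)) := by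
  rintro g hgH ⟨k, hkH, hφk⟩
  constructor
  · rintro ⟨x, hxP, hx⟩
    refine ⟨k, ⟨⟨(k : G), hkH⟩, ?_, rfl⟩, hφk⟩
    apply cone_mem_of_pow_mem hP hp
    have hgq : g ^ q = (k : G) ^ p := by rw [← hφk]; exact hφ k
    have he : (⟨(k : G), hkH⟩ : H) ^ p = x ^ q := by
      ext; push_cast; rw [← hgq, hx]
    rw [he]
    exact cone_pow_mem hP hxP q hq
  · rintro ⟨k', ⟨x, hxP, hx⟩, hφk'⟩
    refine ⟨⟨g, hgH⟩, ?_, rfl⟩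
    apply cone_mem_of_pow_mem hP hq
    have hgq : g ^ q = (k' : G) ^ p := by rw [← hφk']; exact hφ k'
    have he : (⟨g, hgH⟩ : H) ^ q = x ^ p := by
      ext; push_cast; rw [hgq, hx]
    rw [he]
    exact cone_pow_mem hP hxP p hp
end

section
/- Let G be a bi-orderable group and let g ∈ G be a nonidentity element. Then the centralizer C_G(g) of g in G is a relatively convex subgroup of G: there exists a positive cone P of G such that C_G(g) is convex with respect to the left order determined by P. -/
/-- In a bi-orderable group `G`, the centralizer of a nonidentity element `g` is a
relatively convex subgroup of `G`. -/
theorem centralizer_relatively_convex {G : Type*} [Group G]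
    (hbo : IsBiOrderable G) (g : G) (hg : g ≠ 1) :
    ∃ P : Set G, IsPositiveCone P ∧ IsConvex P {h : G | h * g = g * h} := by
  obtain ⟨P, ⟨Pmul, Ptri, Pasym, Pone⟩, Pconj⟩ := hbo
  -- the commutator map
  set c : G → G := fun h => h * g * h⁻¹ * g⁻¹ with hc
  have conj_back : ∀ a p : G, a * p * a⁻¹ ∈ P → p ∈ P := by
    intro a p h
    have := Pconj a⁻¹ _ h
    simpa [mul_assoc] using this
  have comm_iff : ∀ h : G, h * g = g * h ↔ c h = 1 := by
    intro h
    simp only [hc]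
    constructor
    · intro hcomm; rw [hcomm]; group
    · intro h1
      have : h * g * h⁻¹ * g⁻¹ * g * h = 1 * g * h := by rw [h1]
      have := this
      rw [one_mul] at this
      calc h * g = h * g * h⁻¹ * g⁻¹ * g * h := by group
        _ = g * h := this
  have key : ∀ a b : G, c (a * b) = a * c b * a⁻¹ * c a := by
    intro a b; simp only [hc]; group
  have cinv : ∀ h : G, c h⁻¹ = h⁻¹ * (c h)⁻¹ * h := by
    intro h; simp only [hc]; group
  refine ⟨{h : G | c h ∈ P ∨ (h * g = g * h ∧ h ∈ P)}, ⟨?_, ?_, ?_, ?_⟩, ?_⟩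
  · -- closed under multiplication
    rintro a (ha | ⟨ha, haP⟩) b (hb | ⟨hb, hbP⟩)
    · left
      rw [key]
      exact Pmul _ (Pconj a _ hb) _ ha
    · left
      rw [key, (comm_iff b).mp hb]
      simpa using ha
    · left
      rw [key, (comm_iff a).mp ha]
      simpa using Pconj a _ hb
    · right
      constructor
      · calc a * b * g = a * (g * b) := by rw [mul_assoc, hb]
          _ = g * (a * b) := by rw [← mul_assoc, ha, mul_assoc]
      · exact Pmul _ haP _ hbP
  · -- trichotomy
    intro h
    rcases Ptri (c h) with hch | hch | hch
    · exact Or.inl (Or.inl hch)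
    · refine Or.inr (Or.inl (Or.inl ?_))
      rw [cinv]
      have := Pconj h⁻¹ _ hch
      simpa using this
    · have hcomm : h * g = g * h := (comm_iff h).mpr hch
      rcases Ptri h with hh | hh | hh
      · exact Or.inl (Or.inr ⟨hcomm, hh⟩)
      · refine Or.inr (Or.inl (Or.inr ⟨?_, hh⟩))
        calc h⁻¹ * g = h⁻¹ * g * (h * h⁻¹) := by group
          _ = h⁻¹ * (g * h) * h⁻¹ := by group
          _ = h⁻¹ * (h * g) * h⁻¹ := by rw [hcomm]
          _ = g * h⁻¹ := by group
      · exact Or.inr (Or.inr hh)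
  · -- asymmetry
    rintro h (hh | ⟨hh, hhP⟩) (hinv | ⟨hinv, hinvP⟩)
    · rw [cinv] at hinv
      exact Pasym _ hh (conj_back h⁻¹ _ (by simpa using hinv))
    · have hcomm : h * g = g * h := by
        calc h * g = h * g * (h⁻¹ * h) := by group
          _ = h * (g * h⁻¹) * h := by group
          _ = h * (h⁻¹ * g) * h := by rw [hinv]
          _ = g * h := by group
      rw [(comm_iff h).mp hcomm] at hh
      exact Pone hh
    · have hcomm : h⁻¹ * g = g * h⁻¹ := by
        calc h⁻¹ * g = h⁻¹ * g * (h * h⁻¹) := by group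
          _ = h⁻¹ * (g * h) * h⁻¹ := by group
          _ = h⁻¹ * (h * g) * h⁻¹ := by rw [hh]
          _ = g * h⁻¹ := by group
      rw [(comm_iff h⁻¹).mp hcomm] at hinv
      exact Pone hinv
    · exact Pasym _ hhP hinvP
  · -- 1 not in cone
    rintro (h1 | ⟨-, h1⟩)
    · have : c 1 = 1 := by simp only [hc]; group
      rw [this] at h1
      exact Pone h1
    · exact Pone h1
  · -- convexity
    intro a ha b hb f hf1 hf2
    simp only [Set.mem_setOf_eq] at ha hb ⊢
    have hca : c a = 1 := (comm_iff a).mp ha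
    have hcb : c b = 1 := (comm_iff b).mp hb
    have hcainv : c a⁻¹ = 1 := by rw [cinv, hca]; group
    rcases hf1 with hf1 | ⟨hf1, -⟩
    · rcases hf2 with hf2 | ⟨hf2, -⟩
      · -- c f ∈ P and (c f)⁻¹ ∈ P : contradiction
        exfalso
        rw [key, hcainv, mul_one] at hf1
        have hcf : c f ∈ P := conj_back a⁻¹ _ (by simpa using hf1)
        have : c f⁻¹ ∈ P := by rw [key, hcb] at hf2; simpa using hf2
        rw [cinv] at this
        exact Pasym _ hcf (conj_back f⁻¹ _ (by simpa using this))
      · -- f⁻¹ * b commutes with g, so f does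
        have hfb : (f⁻¹ * b) * g = g * (f⁻¹ * b) := hf2
        have : f = b * (f⁻¹ * b)⁻¹ := by group
        rw [this]
        calc b * (f⁻¹ * b)⁻¹ * g
            = b * (f⁻¹ * b)⁻¹ * g * ((f⁻¹ * b) * (f⁻¹ * b)⁻¹) := by group
          _ = b * (f⁻¹ * b)⁻¹ * (g * (f⁻¹ * b)) * (f⁻¹ * b)⁻¹ := by group
          _ = b * (f⁻¹ * b)⁻¹ * ((f⁻¹ * b) * g) * (f⁻¹ * b)⁻¹ := by rw [hfb]
          _ = b * g * (f⁻¹ * b)⁻¹ := by group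
          _ = g * b * (f⁻¹ * b)⁻¹ := by rw [hb]
          _ = g * (b * (f⁻¹ * b)⁻¹) := by group
    · -- a⁻¹ * f commutes with g, so f does
      have hfa : (a⁻¹ * f) * g = g * (a⁻¹ * f) := hf1
      have : f = a * (a⁻¹ * f) := by group
      rw [this]
      calc a * (a⁻¹ * f) * g = a * ((a⁻¹ * f) * g) := by group
        _ = a * (g * (a⁻¹ * f)) := by rw [hfa]
        _ = (a * g) * (a⁻¹ * f) := by group
        _ = (g * a) * (a⁻¹ * f) := by rw [ha]
        _ = g * (a * (a⁻¹ * f)) := by group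
end

section
/- Let A be the automorphism of ℚ² given by the matrix [[1,2],[1,1]], i.e., A(a,b) = (a+2b, a+b), and let K = ℚ² ⋊ ℤ be the semidirect product in which the generator of ℤ acts on ℚ² by A. Then K is bi-orderable: K admits a positive cone P with kPk⁻¹ ⊆ P for all k ∈ K. -/
/-- The automorphism of `ℚ²` given by the matrix `[[1,2],[1,1]]`:
`A(a,b) = (a + 2b, a + b)`. -/
def Amat : (ℚ × ℚ) ≃+ (ℚ × ℚ) where
  toFun x := (x.1 + 2 * x.2, x.1 + x.2)
  invFun x := (-x.1 + 2 * x.2, x.1 - x.2)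
  left_inv x := by obtain ⟨a, b⟩ := x; simp; constructor <;> ring
  right_inv x := by obtain ⟨a, b⟩ := x; simp; constructor <;> ring
  map_add' x y := by simp [Prod.add_def]; constructor <;> ring

/-- The action of `ℤ` on `ℚ²` in which the generator `1 ∈ ℤ` acts by `A`. -/
def Aaction : Multiplicative ℤ →* MulAut (Multiplicative (ℚ × ℚ)) :=
  zpowersHom (MulAut (Multiplicative (ℚ × ℚ))) (AddEquiv.toMultiplicative Amat)

/-- The group `K = ℚ² ⋊ ℤ`, where the generator of `ℤ` acts by `A`. -/
abbrev Kgroup := SemidirectProduct (Multiplicative (ℚ × ℚ)) (Multiplicative ℤ) Aaction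

/-!
Under `ℚ² ≅ ℚ(√2)`, `(a, b) ↦ a + b√2`, the matrix `A` is multiplication by the unit `1 + √2`.
Hence the functional `(a, b) ↦ a + b√2 ∈ ℝ` is injective (as `√2` is irrational) and scales by the
positive factor `(1 + √2)ⁿ` under `Aⁿ`, so the sign of this functional is an `A`-invariant
bi-order on `ℚ²`. Ordering `K` lexicographically, first by the `ℤ`-coordinate and then by this
functional on `ℚ²`, gives a bi-invariant positive cone.
-/

namespace SemidirectProduct

variable {N G : Type*} [Group N] [Group G] {φ : G →* MulAut N}

def lexCone (Q : Set N) (R : Set G) : Set (N ⋊[φ] G) :=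
  {x | x.right ∈ R ∨ (x.right = 1 ∧ x.left ∈ Q)}

variable {Q : Set N} {R : Set G}

theorem left_mul_of_right_eq_one {x : N ⋊[φ] G} (hx : x.right = 1) (y : N ⋊[φ] G) :
    (x * y).left = x.left * y.left := by
  simp [hx]

theorem left_inv_of_right_eq_one {x : N ⋊[φ] G} (hx : x.right = 1) : x⁻¹.left = x.left⁻¹ := by
  simp [hx]

theorem left_conj_of_right_eq_one (k : N ⋊[φ] G) {x : N ⋊[φ] G} (hx : x.right = 1) :
    (k * x * k⁻¹).left = k.left * φ k.right x.left * k.left⁻¹ := by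
  simp [hx]

theorem mul_mem_lexCone (hQ : IsPositiveCone Q) (hR : IsPositiveCone R) {x y : N ⋊[φ] G}
    (hx : x ∈ lexCone Q R) (hy : y ∈ lexCone Q R) : x * y ∈ lexCone Q R := by
  rcases hx with hx | ⟨hx, hxQ⟩ <;> rcases hy with hy | ⟨hy, hyQ⟩
  · exact Or.inl (hR.1 _ hx _ hy)
  · exact Or.inl (by simpa [hy] using hx)
  · exact Or.inl (by simpa [hx] using hy)
  · exact Or.inr ⟨by simp [hx, hy], by rw [left_mul_of_right_eq_one hx]; exact hQ.1 _ hxQ _ hyQ⟩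

theorem lexCone_trichotomy (hQ : IsPositiveCone Q) (hR : IsPositiveCone R) (x : N ⋊[φ] G) :
    x ∈ lexCone Q R ∨ x⁻¹ ∈ lexCone Q R ∨ x = 1 := by
  rcases hR.2.1 x.right with hxR | hxR | hx
  · exact Or.inl (Or.inl hxR)
  · exact Or.inr (Or.inl (Or.inl hxR))
  rcases hQ.2.1 x.left with hxQ | hxQ | hx'
  · exact Or.inl (Or.inr ⟨hx, hxQ⟩)
  · exact Or.inr (Or.inl (Or.inr ⟨by simp [hx], by rwa [left_inv_of_right_eq_one hx]⟩))
  · exact Or.inr (Or.inr (SemidirectProduct.ext hx' hx))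

theorem inv_notMem_lexCone (hQ : IsPositiveCone Q) (hR : IsPositiveCone R) {x : N ⋊[φ] G}
    (hx : x ∈ lexCone Q R) : x⁻¹ ∉ lexCone Q R := by
  obtain ⟨-, -, hRasymm, hR1⟩ := hR
  rintro (hx' | ⟨hx', hxQ'⟩) <;> rcases hx with hx | ⟨hx, hxQ⟩
  · exact hRasymm _ hx hx'
  · simp only [inv_right, hx, inv_one] at hx'; exact hR1 hx'
  · simp only [inv_right, inv_eq_one] at hx'; exact hR1 (hx' ▸ hx)
  · rw [left_inv_of_right_eq_one hx] at hxQ'; exact hQ.2.2.1 _ hxQ hxQ'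

theorem one_notMem_lexCone (hQ : IsPositiveCone Q) (hR : IsPositiveCone R) :
    (1 : N ⋊[φ] G) ∉ lexCone Q R := by
  rintro (h | ⟨-, h⟩)
  exacts [hR.2.2.2 h, hQ.2.2.2 h]

theorem isPositiveCone_lexCone (hQ : IsPositiveCone Q) (hR : IsPositiveCone R) :
    IsPositiveCone (lexCone Q R : Set (N ⋊[φ] G)) :=
  ⟨fun _ hx _ hy ↦ mul_mem_lexCone hQ hR hx hy, lexCone_trichotomy hQ hR,
    fun _ hx ↦ inv_notMem_lexCone hQ hR hx, one_notMem_lexCone hQ hR⟩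

theorem conj_mem_lexCone (hQconj : ∀ n, ∀ m ∈ Q, n * m * n⁻¹ ∈ Q)
    (hQact : ∀ g, ∀ m ∈ Q, φ g m ∈ Q) (hRconj : ∀ g, ∀ h ∈ R, g * h * g⁻¹ ∈ R)
    (k : N ⋊[φ] G) {x : N ⋊[φ] G} (hx : x ∈ lexCone Q R) : k * x * k⁻¹ ∈ lexCone Q R := by
  rcases hx with hx | ⟨hx, hxQ⟩
  · exact Or.inl (by simpa using hRconj _ _ hx)
  · refine Or.inr ⟨by simp [hx], ?_⟩
    rw [left_conj_of_right_eq_one k hx]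
    exact hQconj _ _ (hQact _ _ hxQ)

end SemidirectProduct

theorem isPositiveCone_setOf_pos {M Γ : Type*} [AddCommGroup M] [AddCommGroup Γ] [LinearOrder Γ]
    [IsOrderedAddMonoid Γ] {f : M →+ Γ} (hf : Function.Injective f) :
    IsPositiveCone {m : Multiplicative M | 0 < f m.toAdd} := by
  refine ⟨fun x hx y hy ↦ ?_, fun x ↦ ?_, fun x hx hx' ↦ ?_, ?_⟩
  · simpa using add_pos hx hy
  · rcases lt_trichotomy 0 (f x.toAdd) with h | h | h
    · exact Or.inl h
    · exact Or.inr (Or.inr ((injective_iff_map_eq_zero f).1 hf _ h.symm))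
    · exact Or.inr (Or.inl (by simpa using h))
  · simp only [Set.mem_ofPred_eq, toAdd_inv, map_neg, Left.neg_pos_iff] at hx'
    exact hx.not_gt hx'
  · simp

noncomputable def toRealSqrtTwo : ℚ × ℚ →+ ℝ where
  toFun v := v.1 + v.2 * √2
  map_zero' := by simp
  map_add' v w := by simp only [Prod.fst_add, Prod.snd_add]; push_cast; ring

theorem toRealSqrtTwo_injective : Function.Injective toRealSqrtTwo := by
  refine (injective_iff_map_eq_zero _).2 fun ⟨a, b⟩ h ↦ ?_
  change (a : ℝ) + b * √2 = 0 at h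
  obtain rfl : b = 0 := by
    by_contra hb
    exact ((irrational_sqrt_two.ratCast_mul hb).ratCast_add a).ne_zero h
  simpa using h

theorem toRealSqrtTwo_Amat (v : ℚ × ℚ) :
    toRealSqrtTwo (Amat v) = (1 + √2) * toRealSqrtTwo v := by
  change ((v.1 + 2 * v.2 : ℚ) : ℝ) + (v.1 + v.2 : ℚ) * √2 = (1 + √2) * (v.1 + v.2 * √2)
  push_cast
  linear_combination -(v.2 : ℝ) * Real.mul_self_sqrt (zero_le_two : (0 : ℝ) ≤ 2)

theorem toRealSqrtTwo_Aaction (g : Multiplicative ℤ) (m : Multiplicative (ℚ × ℚ)) :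
    toRealSqrtTwo (Aaction g m).toAdd = (1 + √2) ^ g.toAdd * toRealSqrtTwo m.toAdd := by
  have hne : (1 + √2 : ℝ) ≠ 0 := by positivity
  rw [Aaction, zpowersHom_apply]
  induction g.toAdd using Int.induction_on generalizing m with
  | zero => simp
  | succ n ih =>
    rw [zpow_add_one, MulAut.mul_apply, ih, zpow_add_one₀ hne, mul_assoc]
    exact congrArg _ (toRealSqrtTwo_Amat m.toAdd)
  | pred n ih =>
    rw [zpow_sub_one, MulAut.mul_apply, ih, zpow_sub_one₀ hne, mul_assoc]
    refine congrArg _ ((eq_inv_mul_iff_mul_eq₀ hne).2 ?_)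
    rw [← toRealSqrtTwo_Amat]
    exact congrArg _ (Amat.apply_symm_apply m.toAdd)

open SemidirectProduct in
/-- `K = ℚ² ⋊_A ℤ` is bi-orderable. -/
theorem Kgroup_biOrderable :
    ∃ P : Set Kgroup, IsPositiveCone P ∧ ∀ k : Kgroup, ∀ x ∈ P, k * x * k⁻¹ ∈ P := by
  let Q : Set (Multiplicative (ℚ × ℚ)) := {m | 0 < toRealSqrtTwo m.toAdd}
  let R : Set (Multiplicative ℤ) := {n | 0 < AddMonoidHom.id ℤ n.toAdd}
  have hQ : IsPositiveCone Q := isPositiveCone_setOf_pos toRealSqrtTwo_injective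
  have hR : IsPositiveCone R := isPositiveCone_setOf_pos Function.injective_id
  have hQact : ∀ g, ∀ m ∈ Q, Aaction g m ∈ Q := fun g m hm ↦ by
    simp only [Q, Set.mem_ofPred_eq, toRealSqrtTwo_Aaction]
    exact mul_pos (zpow_pos (by positivity) _) hm
  have hconj {A : Type} [CommGroup A] (S : Set A) : ∀ a, ∀ s ∈ S, a * s * a⁻¹ ∈ S :=
    fun a s hs ↦ by rwa [mul_inv_cancel_comm]
  exact ⟨lexCone Q R, isPositiveCone_lexCone hQ hR,
    fun k _ ↦ conj_mem_lexCone (hconj Q) hQact (hconj R) k⟩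
end
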